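/- arXiv:2012.13531 — 4 statements merged into one kernel-verified Lean document; each statement's English description precedes it below -/
import Mathlib

section
/- Let α > −2 and let N be an integer with N ≤ 2 (N = 1 or N = 2). Then there is no entire radial solution of Δ²u = |x|^α e^u normalized by u(0) = 0, for any value of the initial datum β = v(0). -/
open MeasureTheory Real Set Filter

noncomputable section

/-- An entire radial solution of `Δ²u = |x|^α e^u` in dimension `N`, normalized by
`u(0) = 0`: a pair of `C²` functions `u, v` on `[0,∞)` with `u(0) = 0`,
`u′(0) = v′(0) = 0` (one-sided derivatives at `0`), satisfying for all `r > 0`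
`u″(r) + (N-1)u′(r)/r = v(r)` and `v″(r) + (N-1)v′(r)/r = r^α e^{u(r)}`. -/
def IsEntireRadialSolution (N : ℕ) (α : ℝ) (u v : ℝ → ℝ) : Prop :=
  ContDiffOn ℝ 2 u (Set.Ici 0) ∧ ContDiffOn ℝ 2 v (Set.Ici 0) ∧
  u 0 = 0 ∧ derivWithin u (Set.Ici 0) 0 = 0 ∧ derivWithin v (Set.Ici 0) 0 = 0 ∧
  (∀ r > (0 : ℝ), deriv (deriv u) r + ((N : ℝ) - 1) * deriv u r / r = v r) ∧
  (∀ r > (0 : ℝ), deriv (deriv v) r + ((N : ℝ) - 1) * deriv v r / r = r ^ α * Real.exp (u r))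

/-- The set of initial data `β = v(0)` for which an entire radial solution exists. -/
def entireSet (N : ℕ) (α : ℝ) : Set ℝ :=
  {β : ℝ | ∃ u v : ℝ → ℝ, IsEntireRadialSolution N α u v ∧ v 0 = β}

/-!
Set `p = N - 1 ∈ [0, 1]`, `G = r^p v'` and `H = r^p u'`, so that `G' = r^{p+α} e^u > 0` and
`H' = r^p v`. Since `G(0⁺) = 0`, `G` is positive and increasing, and as `p ≤ 1` this gives
`v' ≥ G(1) / r`, so `v → ∞` logarithmically. Then `H' ≥ 1` eventually, so `H ≥ r / 2` and, again
by `p ≤ 1`, `u' ≥ 1/2`: eventually `u ≥ 8 log (2r)`, and the source `r^{p+α} e^u` dominates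
`e^{u/2}` times the weights. Integrating `G'`, `v'`, `H'`, `u'` in turn over four consecutive
intervals of length `t` gives `u(r + 4t) ≥ u(r) + t⁴ e^{u(r)/2}`. Hence a step of length
`8 e^{-u/8}` raises `u` by `8`; these lengths decay geometrically, so `u` is unbounded on some
bounded interval `[R, 2R]`, contradicting continuity.
-/

open Topology

theorem Convex.mul_sub_le_sub_of_hasDerivAt {D : Set ℝ} (hD : Convex ℝ D) {f f' : ℝ → ℝ}
    {C : ℝ} (hf : ∀ x ∈ D, HasDerivAt f (f' x) x) (hC : ∀ x ∈ D, C ≤ f' x) {x y : ℝ}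
    (hx : x ∈ D) (hy : y ∈ D) (hxy : x ≤ y) : C * (y - x) ≤ f y - f x :=
  hD.mul_sub_le_image_sub_of_le_deriv (fun z hz => (hf z hz).continuousAt.continuousWithinAt)
    (fun z hz => (hf z (interior_subset hz)).differentiableAt.differentiableWithinAt)
    (fun z hz => (hf z (interior_subset hz)).deriv ▸ hC z (interior_subset hz)) x hx y hy hxy

theorem add_mul_le_of_hasDerivAt {f f' : ℝ → ℝ} {a b C : ℝ} (hab : a ≤ b)
    (hf : ∀ x ∈ Icc a b, HasDerivAt f (f' x) x) (hC : ∀ x ∈ Icc a b, C ≤ f' x) :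
    f a + C * (b - a) ≤ f b := by
  have := (convex_Icc a b).mul_sub_le_sub_of_hasDerivAt hf hC (left_mem_Icc.2 hab)
    (right_mem_Icc.2 hab) hab
  linarith

theorem Convex.monotoneOn_of_hasDerivAt_nonneg {D : Set ℝ} (hD : Convex ℝ D) {f f' : ℝ → ℝ}
    (hf : ∀ x ∈ D, HasDerivAt f (f' x) x) (hf' : ∀ x ∈ D, 0 ≤ f' x) : MonotoneOn f D :=
  fun x hx y hy hxy => by
    have := hD.mul_sub_le_sub_of_hasDerivAt hf hf' hx hy hxy
    linarith

theorem exists_add_le_of_hasDerivAt_le {f g f' g' : ℝ → ℝ}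
    (h : ∀ᶠ x in atTop, HasDerivAt f (f' x) x ∧ HasDerivAt g (g' x) x ∧ g' x ≤ f' x) :
    ∃ C, ∀ᶠ x in atTop, g x + C ≤ f x := by
  obtain ⟨a, ha⟩ := eventually_atTop.1 h
  have hmono : MonotoneOn (f - g) (Ici a) := (convex_Ici a).monotoneOn_of_hasDerivAt_nonneg
    (fun x hx => (ha x hx).1.sub (ha x hx).2.1) (fun x hx => sub_nonneg.2 (ha x hx).2.2)
  refine ⟨f a - g a, eventually_atTop.2 ⟨a, fun x hx => ?_⟩⟩
  have := hmono self_mem_Ici hx hx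
  simp only [Pi.sub_apply] at this
  linarith

theorem not_bddAbove_image_Icc_of_exp_step {f : ℝ → ℝ} {a b K : ℝ} (hK : 0 ≤ K)
    (hab : a + 2 * K * exp (-f a / 8) ≤ b)
    (hstep : ∀ r ∈ Icc a b, r + K * exp (-f r / 8) ≤ b → f r + 8 ≤ f (r + K * exp (-f r / 8))) :
    ¬ BddAbove (f '' Icc a b) := by
  have he : 2 * exp (-1) ≤ 1 := by
    rw [exp_neg, ← div_eq_mul_inv, div_le_one (exp_pos 1)]
    linarith [add_one_le_exp 1]
  -- Each step raises `f` by `8` and so at least halves the next step length (`2 e⁻¹ ≤ 1`):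
  -- all steps fit into a length `2 K e^{-f a / 8}`.
  have hsteps : ∀ n : ℕ, ∃ r, a ≤ r ∧ f a + 8 * n ≤ f r ∧
      r + 2 * K * exp (-(f a + 8 * n) / 8) ≤ a + 2 * K * exp (-f a / 8) := by
    intro n
    induction n with
    | zero => exact ⟨a, le_rfl, by simp, by simp⟩
    | succ n ih =>
      obtain ⟨r, har, hfr, hrb⟩ := ih
      set k := K * exp (-(f a + 8 * n) / 8)
      have hδ : K * exp (-f r / 8) ≤ k :=
        mul_le_mul_of_nonneg_left (exp_le_exp.2 (by linarith)) hK
      have hnext : 2 * K * exp (-(f a + 8 * ↑(n + 1)) / 8) ≤ k := by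
        have : exp (-(f a + 8 * ↑(n + 1)) / 8) = exp (-(f a + 8 * n) / 8) * exp (-1) := by
          rw [← exp_add]; push_cast; ring_nf
        rw [this]
        nlinarith [mul_nonneg hK (exp_pos (-(f a + 8 * n) / 8)).le]
      have hb : r + K * exp (-f r / 8) ≤ b := by
        nlinarith [mul_nonneg hK (exp_pos (-(f a + 8 * n) / 8)).le]
      refine ⟨r + K * exp (-f r / 8), le_add_of_le_of_nonneg har (by positivity), ?_, by linarith⟩
      have := hstep r ⟨har, by nlinarith [mul_nonneg hK (exp_pos (-f r / 8)).le]⟩ hb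
      push_cast
      linarith
  rintro ⟨M, hM⟩
  obtain ⟨n, hn⟩ := exists_nat_gt ((M - f a) / 8)
  obtain ⟨r, har, hfr, hrb⟩ := hsteps n
  have hr : r ∈ Icc a b := ⟨har, by nlinarith [mul_nonneg hK (exp_pos (-(f a + 8 * n) / 8)).le]⟩
  have := hM ⟨r, hr, rfl⟩
  linarith [(div_lt_iff₀ (by norm_num : (0 : ℝ) < 8)).1 hn]

theorem rpow_natCast_sub_one_le_self {N : ℕ} (hN : N ≤ 2) {x : ℝ} (hx : 1 ≤ x) :
    x ^ ((N : ℝ) - 1) ≤ x := by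
  have : (N : ℝ) ≤ 2 := by exact_mod_cast hN
  simpa using rpow_le_rpow_of_exponent_le hx (show (N : ℝ) - 1 ≤ 1 by linarith)

theorem one_le_rpow_natCast_sub_one {N : ℕ} (hN : 1 ≤ N) {x : ℝ} (hx : 1 ≤ x) :
    1 ≤ x ^ ((N : ℝ) - 1) :=
  one_le_rpow hx (sub_nonneg.2 (Nat.one_le_cast.2 hN))

theorem sq_rpow_mul_exp_half_le {N : ℕ} {α : ℝ} (hN1 : 1 ≤ N) (hN2 : N ≤ 2) (hα : -2 < α)
    {s b x : ℝ} (hs : 1 ≤ s) (hb : 1 ≤ b) (hbs : b ≤ 2 * s) (hx : 8 * log (2 * s) ≤ x) :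
    (b ^ ((N : ℝ) - 1)) ^ 2 * exp (x / 2) ≤ s ^ ((N : ℝ) - 1) * (s ^ α * exp x) := by
  set p := (N : ℝ) - 1
  have hp0 : 0 ≤ p := sub_nonneg.2 (Nat.one_le_cast.2 hN1)
  have hp1 : p ≤ 1 := by
    have : (N : ℝ) ≤ 2 := by exact_mod_cast hN2
    linarith
  have hlogb : 0 ≤ log b := log_nonneg hb
  have hlogs : 0 ≤ log s := log_nonneg hs
  have hbs' : log b ≤ log (2 * s) := log_le_log (by linarith) hbs
  have hss : log s ≤ log (2 * s) := log_le_log (by linarith) (by linarith)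
  have h1 : log b * p ≤ log (2 * s) := by nlinarith
  have h2 : -2 * log s ≤ log s * p + log s * α := by nlinarith
  rw [rpow_def_of_pos (by linarith), rpow_def_of_pos (by linarith), rpow_def_of_pos (by linarith),
    ← exp_nat_mul, ← exp_add, ← exp_add, ← exp_add, exp_le_exp]
  push_cast
  linarith

/-- The radial Laplacian of `w` is `r ^ (1 - N)` times the derivative of `radialFlux N w`. -/
def radialFlux (N : ℕ) (w : ℝ → ℝ) (r : ℝ) : ℝ := r ^ ((N : ℝ) - 1) * deriv w r

theorem ContDiffOn.hasDerivAt_deriv_of_pos {w : ℝ → ℝ} (hw : ContDiffOn ℝ 2 w (Ici 0)) {r : ℝ}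
    (hr : 0 < r) : HasDerivAt w (deriv w r) r ∧ HasDerivAt (deriv w) (deriv (deriv w) r) r := by
  have hw' : ContDiffOn ℝ 2 w (Ioi 0) := hw.mono Ioi_subset_Ici_self
  have hdw : ContDiffOn ℝ 1 (deriv w) (Ioi 0) := hw'.deriv_of_isOpen isOpen_Ioi (by norm_num)
  exact ⟨((hw'.contDiffAt (Ioi_mem_nhds hr)).differentiableAt (by norm_num)).hasDerivAt,
    ((hdw.contDiffAt (Ioi_mem_nhds hr)).differentiableAt (by norm_num)).hasDerivAt⟩

theorem hasDerivAt_radialFlux (N : ℕ) {w : ℝ → ℝ} {r : ℝ} (hr : 0 < r)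
    (hw : HasDerivAt (deriv w) (deriv (deriv w) r) r) :
    HasDerivAt (radialFlux N w)
      (r ^ ((N : ℝ) - 1) * (deriv (deriv w) r + ((N : ℝ) - 1) * deriv w r / r)) r :=
  ((hasDerivAt_rpow_const (Or.inl hr.ne')).mul hw).congr_deriv (by
    rw [rpow_sub_one hr.ne']
    field_simp
    ring)

theorem tendsto_radialFlux_nhdsGT_zero {N : ℕ} (hN : 1 ≤ N) {w : ℝ → ℝ}
    (hw : ContDiffOn ℝ 1 w (Ici 0)) (hw0 : derivWithin w (Ici 0) 0 = 0) :
    Tendsto (radialFlux N w) (𝓝[>] 0) (𝓝 0) := by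
  have hderiv : Tendsto (deriv w) (𝓝[>] 0) (𝓝 0) := by
    have hc := hw.continuousOn_derivWithin (uniqueDiffOn_Ici 0) le_rfl 0 self_mem_Ici
    rw [ContinuousWithinAt, hw0] at hc
    refine (hc.mono_left (nhdsWithin_mono 0 Ioi_subset_Ici_self)).congr' ?_
    filter_upwards [self_mem_nhdsWithin] with s hs using derivWithin_of_mem_nhds (Ici_mem_nhds hs)
  have hweight := (continuousAt_rpow_const 0 ((N : ℝ) - 1)
    (Or.inr (sub_nonneg.2 (Nat.one_le_cast.2 hN)))).tendsto.mono_left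
    (nhdsWithin_le_nhds (s := Ioi 0))
  have := hweight.mul hderiv
  rwa [mul_zero] at this

theorem div_le_deriv_of_le_radialFlux {N : ℕ} {w : ℝ → ℝ} {x c M : ℝ} (hx : 0 < x) (hc : 0 ≤ c)
    (hcx : c ≤ radialFlux N w x) (hM : x ^ ((N : ℝ) - 1) ≤ M) : c / M ≤ deriv w x := by
  have hpos := rpow_pos_of_pos hx ((N : ℝ) - 1)
  have : deriv w x = radialFlux N w x / x ^ ((N : ℝ) - 1) := by
    rw [radialFlux, mul_div_cancel_left₀ _ hpos.ne']
  rw [this]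
  exact div_le_div₀ (hc.trans hcx) hcx hpos hM

namespace IsEntireRadialSolution

variable {N : ℕ} {α : ℝ} {u v : ℝ → ℝ}

theorem hasDerivAt_u (h : IsEntireRadialSolution N α u v) {r : ℝ} (hr : 0 < r) :
    HasDerivAt u (deriv u r) r :=
  (h.1.hasDerivAt_deriv_of_pos hr).1

theorem hasDerivAt_v (h : IsEntireRadialSolution N α u v) {r : ℝ} (hr : 0 < r) :
    HasDerivAt v (deriv v r) r :=
  (h.2.1.hasDerivAt_deriv_of_pos hr).1

theorem hasDerivAt_radialFlux_u (h : IsEntireRadialSolution N α u v) {r : ℝ} (hr : 0 < r) :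
    HasDerivAt (radialFlux N u) (r ^ ((N : ℝ) - 1) * v r) r := by
  obtain ⟨hu, -, -, -, -, hequ, -⟩ := h
  simpa only [hequ r hr] using hasDerivAt_radialFlux N hr (hu.hasDerivAt_deriv_of_pos hr).2

theorem hasDerivAt_radialFlux_v (h : IsEntireRadialSolution N α u v) {r : ℝ} (hr : 0 < r) :
    HasDerivAt (radialFlux N v) (r ^ ((N : ℝ) - 1) * (r ^ α * exp (u r))) r := by
  obtain ⟨-, hv, -, -, -, -, heqv⟩ := h
  simpa only [heqv r hr] using hasDerivAt_radialFlux N hr (hv.hasDerivAt_deriv_of_pos hr).2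

theorem monotoneOn_radialFlux_v (h : IsEntireRadialSolution N α u v) :
    MonotoneOn (radialFlux N v) (Ioi 0) :=
  (convex_Ioi 0).monotoneOn_of_hasDerivAt_nonneg (fun _ hr => h.hasDerivAt_radialFlux_v hr)
    (fun r hr => by have : 0 < r := hr; positivity)

theorem radialFlux_v_pos (h : IsEntireRadialSolution N α u v) (hN : 1 ≤ N) {r : ℝ} (hr : 0 < r) :
    0 < radialFlux N v r := by
  have hstrict : StrictMonoOn (radialFlux N v) (Ioi 0) :=
    strictMonoOn_of_deriv_pos (convex_Ioi 0)
      (fun s hs => (h.hasDerivAt_radialFlux_v hs).continuousAt.continuousWithinAt)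
      (fun s hs => by
        rw [interior_Ioi] at hs
        have : 0 < s := hs
        rw [(h.hasDerivAt_radialFlux_v hs).deriv]
        positivity)
  have hv0 : derivWithin v (Ici 0) 0 = 0 := h.2.2.2.2.1
  have hhalf : 0 ≤ radialFlux N v (r / 2) :=
    le_of_tendsto (tendsto_radialFlux_nhdsGT_zero hN (h.2.1.of_le (by norm_num)) hv0)
      (by filter_upwards [Ioo_mem_nhdsGT (half_pos hr)] with s hs using
        hstrict.monotoneOn hs.1 (half_pos hr) hs.2.le)
  linarith [hstrict (half_pos hr) hr (half_lt_self hr)]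

theorem tendsto_v_atTop (h : IsEntireRadialSolution N α u v) (hN1 : 1 ≤ N) (hN2 : N ≤ 2) :
    Tendsto v atTop atTop := by
  set c := radialFlux N v 1
  have hc : 0 < c := h.radialFlux_v_pos hN1 one_pos
  obtain ⟨C, hC⟩ := exists_add_le_of_hasDerivAt_le (f := v) (g := fun x => c * log x)
    (f' := deriv v) (g' := fun x => c * x⁻¹) <| by
      filter_upwards [eventually_ge_atTop 1] with x hx
      have hx0 : 0 < x := by linarith
      refine ⟨h.hasDerivAt_v hx0, (hasDerivAt_log hx0.ne').const_mul c, ?_⟩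
      rw [← div_eq_mul_inv]
      exact div_le_deriv_of_le_radialFlux hx0 hc.le
        (h.monotoneOn_radialFlux_v (mem_Ioi.2 one_pos) hx0 hx) (rpow_natCast_sub_one_le_self hN2 hx)
  exact tendsto_atTop_mono' _ hC
    (tendsto_atTop_add_const_right _ C (tendsto_log_atTop.const_mul_atTop hc))

theorem eventually_half_le_deriv_u (h : IsEntireRadialSolution N α u v) (hN1 : 1 ≤ N)
    (hN2 : N ≤ 2) : ∀ᶠ x in atTop, 1 / 2 ≤ deriv u x := by
  obtain ⟨C, hC⟩ := exists_add_le_of_hasDerivAt_le (f := radialFlux N u) (g := id)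
    (f' := fun x => x ^ ((N : ℝ) - 1) * v x) (g' := fun _ => 1) <| by
      filter_upwards [(h.tendsto_v_atTop hN1 hN2).eventually_ge_atTop 1,
        eventually_ge_atTop 1] with x hv hx
      refine ⟨h.hasDerivAt_radialFlux_u (by linarith), hasDerivAt_id x, ?_⟩
      nlinarith [one_le_rpow_natCast_sub_one hN1 hx]
  filter_upwards [hC, eventually_ge_atTop (max 1 (-2 * C))] with x hHx hx
  have hx1 : 1 ≤ x := le_of_max_le_left hx
  have hH : x / 2 ≤ radialFlux N u x := by
    simp only [id] at hHx
    linarith [le_of_max_le_right hx]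
  have := div_le_deriv_of_le_radialFlux (by linarith) (by linarith) hH
    (rpow_natCast_sub_one_le_self hN2 hx1)
  rwa [div_div_cancel_left' (by linarith : x ≠ 0), ← one_div] at this

theorem eventually_blowUp_regime (h : IsEntireRadialSolution N α u v) (hN1 : 1 ≤ N)
    (hN2 : N ≤ 2) : ∀ᶠ x in atTop, 0 ≤ v x ∧ 0 ≤ deriv u x ∧ 8 * log (2 * x) ≤ u x := by
  have hu' := h.eventually_half_le_deriv_u hN1 hN2
  obtain ⟨C, hC⟩ := exists_add_le_of_hasDerivAt_le (f := u) (g := fun x => x / 2)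
    (f' := deriv u) (g' := fun _ => 1 / 2) <| by
      filter_upwards [hu', eventually_gt_atTop 0] with x hx hx0
      exact ⟨h.hasDerivAt_u hx0, (hasDerivAt_id x).div_const 2, hx⟩
  have hlog : ∀ᶠ x in atTop, 8 * log x ≤ x / 4 := by
    filter_upwards [isLittleO_log_id_atTop.bound (by norm_num : (0 : ℝ) < 1 / 32),
      eventually_ge_atTop 0] with x hx hx0
    rw [norm_eq_abs, id, norm_of_nonneg hx0] at hx
    linarith [le_abs_self (log x)]
  filter_upwards [(h.tendsto_v_atTop hN1 hN2).eventually_ge_atTop 0, hu', hC, hlog,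
    eventually_ge_atTop (4 * (8 * log 2 - C)), eventually_gt_atTop 0] with x hv hux hx hlx hxC hx0
  refine ⟨hv, by linarith, ?_⟩
  rw [log_mul two_ne_zero hx0.ne']
  linarith

theorem monotoneOn_v (h : IsEntireRadialSolution N α u v) (hN : 1 ≤ N) :
    MonotoneOn v (Ioi 0) :=
  (convex_Ioi 0).monotoneOn_of_hasDerivAt_nonneg (fun _ hs => h.hasDerivAt_v hs) fun _ hs => by
    simpa using div_le_deriv_of_le_radialFlux hs le_rfl (h.radialFlux_v_pos hN hs).le le_rfl

theorem monotoneOn_radialFlux_u (h : IsEntireRadialSolution N α u v) {D : Set ℝ}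
    (hD : Convex ℝ D) (hD0 : D ⊆ Ioi 0) (hv : ∀ s ∈ D, 0 ≤ v s) :
    MonotoneOn (radialFlux N u) D :=
  hD.monotoneOn_of_hasDerivAt_nonneg (fun _ hs => h.hasDerivAt_radialFlux_u (hD0 hs))
    fun s hs => mul_nonneg (rpow_nonneg (le_of_lt (hD0 hs)) _) (hv s hs)

theorem mul_exp_mul_sq_le_v (h : IsEntireRadialSolution N α u v) (hN : 1 ≤ N) {r t M : ℝ}
    (hr : 0 < r) (ht : 0 ≤ t) (hM : ∀ s ∈ Icc r (r + 2 * t), s ^ ((N : ℝ) - 1) ≤ M)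
    (hu : ∀ s ∈ Icc r (r + t), 0 ≤ deriv u s) (hv : 0 ≤ v (r + t))
    (hsource : ∀ s ∈ Icc r (r + t),
      M ^ 2 * exp (u s / 2) ≤ s ^ ((N : ℝ) - 1) * (s ^ α * exp (u s))) :
    M * exp (u r / 2) * t ^ 2 ≤ v (r + 2 * t) := by
  have hM0 : 0 < M := (rpow_pos_of_pos hr _).trans_le (hM r (left_mem_Icc.2 (by linarith)))
  have hu_mono : MonotoneOn u (Icc r (r + t)) := (convex_Icc _ _).monotoneOn_of_hasDerivAt_nonneg
    (fun s hs => h.hasDerivAt_u (hr.trans_le hs.1)) hu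
  have hG : M ^ 2 * exp (u r / 2) * t ≤ radialFlux N v (r + t) := by
    have := add_mul_le_of_hasDerivAt (C := M ^ 2 * exp (u r / 2)) (le_add_of_nonneg_right ht)
      (fun s hs => h.hasDerivAt_radialFlux_v (hr.trans_le hs.1))
      (fun s hs => (mul_le_mul_of_nonneg_left (exp_le_exp.2 (by
        linarith [hu_mono (left_mem_Icc.2 (by linarith)) hs hs.1])) (sq_nonneg M)).trans
        (hsource s hs))
    linarith [h.radialFlux_v_pos hN hr]
  have := add_mul_le_of_hasDerivAt (a := r + t) (b := r + 2 * t) (C := M * exp (u r / 2) * t)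
    (by linarith) (fun s hs => h.hasDerivAt_v (by linarith [hs.1])) (fun s hs => by
      have := div_le_deriv_of_le_radialFlux (by linarith [hs.1]) (by positivity)
        (hG.trans (h.monotoneOn_radialFlux_v (mem_Ioi.2 (by linarith))
          (mem_Ioi.2 (by linarith [hs.1])) hs.1))
        (hM s ⟨by linarith [hs.1], hs.2⟩)
      rwa [show M ^ 2 * exp (u r / 2) * t / M = M * exp (u r / 2) * t by field_simp] at this)
  linarith

theorem add_mul_sq_div_le_u (h : IsEntireRadialSolution N α u v) (hN : 1 ≤ N) {r t M c : ℝ}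
    (hr : 1 ≤ r) (ht : 0 ≤ t) (hc : 0 ≤ c)
    (hM : ∀ s ∈ Icc (r + 3 * t) (r + 4 * t), s ^ ((N : ℝ) - 1) ≤ M)
    (hsign : ∀ s ∈ Icc r (r + 4 * t), 0 ≤ v s ∧ 0 ≤ deriv u s) (hvc : c ≤ v (r + 2 * t)) :
    u r + c * t ^ 2 / M ≤ u (r + 4 * t) := by
  set I := Icc r (r + 4 * t)
  have hpos : I ⊆ Ioi 0 := fun s hs => mem_Ioi.2 (by linarith [hs.1])
  have hM0 : 0 < M := (rpow_pos_of_pos (by linarith) _).trans_le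
    (hM (r + 3 * t) (left_mem_Icc.2 (by linarith)))
  have hu_mono : MonotoneOn u I := (convex_Icc _ _).monotoneOn_of_hasDerivAt_nonneg
    (fun s hs => h.hasDerivAt_u (hpos hs)) fun s hs => (hsign s hs).2
  have hH_mono : MonotoneOn (radialFlux N u) I :=
    h.monotoneOn_radialFlux_u (convex_Icc _ _) hpos fun s hs => (hsign s hs).1
  have hH : c * t ≤ radialFlux N u (r + 3 * t) := by
    have := add_mul_le_of_hasDerivAt (a := r + 2 * t) (b := r + 3 * t) (C := c) (by linarith)
      (fun s hs => h.hasDerivAt_radialFlux_u (by linarith [hs.1])) (fun s hs => by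
        have hvs := hvc.trans (h.monotoneOn_v hN (mem_Ioi.2 (by linarith))
          (mem_Ioi.2 (by linarith [hs.1])) hs.1)
        nlinarith [one_le_rpow_natCast_sub_one hN (by linarith [hs.1] : 1 ≤ s)])
    have : 0 ≤ radialFlux N u (r + 2 * t) := mul_nonneg (rpow_nonneg (by linarith) _)
      (hsign (r + 2 * t) ⟨by linarith, by linarith⟩).2
    linarith
  have := add_mul_le_of_hasDerivAt (a := r + 3 * t) (b := r + 4 * t) (C := c * t / M)
    (by linarith) (fun s hs => h.hasDerivAt_u (by linarith [hs.1])) fun s hs =>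
      div_le_deriv_of_le_radialFlux (by linarith [hs.1]) (by positivity)
        (hH.trans (hH_mono ⟨by linarith, by linarith⟩ ⟨by linarith [hs.1], hs.2⟩ hs.1)) (hM s hs)
  have hsq : c * t / M * (r + 4 * t - (r + 3 * t)) = c * t ^ 2 / M := by ring
  linarith [hu_mono (left_mem_Icc.2 (by linarith)) ⟨by linarith, by linarith⟩
    (by linarith : r ≤ r + 3 * t)]

/-- The factor `M ^ 2` pays for the two divisions by the weight `s ^ (N - 1) ≤ M`. -/
theorem add_pow_four_mul_exp_le (h : IsEntireRadialSolution N α u v) (hN : 1 ≤ N) {r t : ℝ}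
    (hr : 1 ≤ r) (ht : 0 ≤ t) (hsign : ∀ s ∈ Icc r (r + 4 * t), 0 ≤ v s ∧ 0 ≤ deriv u s)
    (hsource : ∀ s ∈ Icc r (r + 4 * t), ((r + 4 * t) ^ ((N : ℝ) - 1)) ^ 2 * exp (u s / 2) ≤
      s ^ ((N : ℝ) - 1) * (s ^ α * exp (u s))) :
    u r + t ^ 4 * exp (u r / 2) ≤ u (r + 4 * t) := by
  set M := (r + 4 * t) ^ ((N : ℝ) - 1)
  have hM : ∀ s ∈ Icc r (r + 4 * t), s ^ ((N : ℝ) - 1) ≤ M := fun s hs =>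
    rpow_le_rpow (by linarith [hs.1]) hs.2 (sub_nonneg.2 (Nat.one_le_cast.2 hN))
  have hM0 : 0 < M := by positivity
  have hv := h.mul_exp_mul_sq_le_v hN (by linarith) ht
    (fun s hs => hM s (Icc_subset_Icc le_rfl (by linarith) hs))
    (fun s hs => (hsign s (Icc_subset_Icc le_rfl (by linarith) hs)).2)
    (hsign (r + t) ⟨by linarith, by linarith⟩).1
    (fun s hs => hsource s (Icc_subset_Icc le_rfl (by linarith) hs))
  have := h.add_mul_sq_div_le_u hN hr ht (by positivity)
    (fun s hs => hM s (Icc_subset_Icc (by linarith) le_rfl hs)) hsign hv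
  rwa [show M * exp (u r / 2) * t ^ 2 * t ^ 2 / M = t ^ 4 * exp (u r / 2) by field_simp] at this

theorem add_eight_le (h : IsEntireRadialSolution N α u v) (hN1 : 1 ≤ N) (hN2 : N ≤ 2)
    (hα : -2 < α) {R : ℝ} (hR : 1 ≤ R)
    (hregime : ∀ s ≥ R, 0 ≤ v s ∧ 0 ≤ deriv u s ∧ 8 * log (2 * s) ≤ u s) {r : ℝ} (hr : R ≤ r)
    (hb : r + 8 * exp (-u r / 8) ≤ 2 * R) : u r + 8 ≤ u (r + 8 * exp (-u r / 8)) := by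
  set t := 2 * exp (-u r / 8)
  have hrt : r + 4 * t = r + 8 * exp (-u r / 8) := by ring
  have hincr : t ^ 4 * exp (u r / 2) = 16 := by
    rw [mul_pow, ← exp_nat_mul, mul_assoc, ← exp_add,
      show ((4 : ℕ) : ℝ) * (-u r / 8) + u r / 2 = 0 by push_cast; ring, exp_zero]
    norm_num
  have := h.add_pow_four_mul_exp_le hN1 (t := t) (hR.trans hr) (by positivity)
    (fun s hs => ⟨(hregime s (hr.trans hs.1)).1, (hregime s (hr.trans hs.1)).2.1⟩)
    (fun s hs => sq_rpow_mul_exp_half_le hN1 hN2 hα (hR.trans (hr.trans hs.1))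
      (by linarith [hs.1, hs.2]) (by linarith [hs.1, hs.2]) (hregime s (hr.trans hs.1)).2.2)
  rw [hincr, hrt] at this
  linarith

end IsEntireRadialSolution

/-- For `N ≤ 2` (and `α > -2`) there is no entire radial solution of
`Δ²u = |x|^α e^u` normalized by `u(0) = 0`, whatever the initial datum `β = v(0)`. -/
theorem no_entire_radial_solution_low_dimension
    (N : ℕ) (hN1 : 1 ≤ N) (hN2 : N ≤ 2) (α : ℝ) (hα : -2 < α) :
    ¬ ∃ u v : ℝ → ℝ, IsEntireRadialSolution N α u v := by
  rintro ⟨u, v, h⟩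
  obtain ⟨R, hR⟩ := eventually_atTop.1
    ((h.eventually_blowUp_regime hN1 hN2).and (eventually_ge_atTop 16))
  have hR16 : 16 ≤ R := (hR R le_rfl).2
  have hregime := fun s hs => (hR s hs).1
  have hunbdd : ¬ BddAbove (u '' Icc R (2 * R)) := by
    refine not_bddAbove_image_Icc_of_exp_step (K := 8) (by norm_num) ?_
      fun r hr hb => h.add_eight_le hN1 hN2 hα (by linarith) hregime hr.1 hb
    have := (hregime R le_rfl).2.2
    have : exp (-u R / 8) ≤ 1 :=
      exp_le_one_iff.2 (by linarith [log_nonneg (by linarith : (1 : ℝ) ≤ 2 * R)])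
    linarith
  exact hunbdd (isCompact_Icc.bddAbove_image
    (h.1.continuousOn.mono fun s hs => (by linarith [hs.1] : (0 : ℝ) ≤ s)))
end
end

section
/- Let f : ℝ × ℝ → ℝ be continuous and suppose there exist p > 1 and s₀ > 0 such that f(t, s) ≥ s^p for all t ∈ ℝ and all s ≥ s₀. Let m ≥ 1 be an integer, a₁, …, a_m real numbers, t₀ ∈ ℝ, and let u : [t₀, ∞) → ℝ be a C^m function satisfying Σ_{k=1}^{m} a_k u^{(k)}(t) = f(t, u(t)) for all t ≥ t₀. Then u(t) does not tend to +∞ as t → ∞. -/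
/-!
If `u → ∞`, then on every window `[A, A + R]` far enough out `u ≥ max s₀ 1`, so
`u ^ p ≤ ∑ aₖ u⁽ᵏ⁾` there. Test this against the bump `φ(x) = (y (1 - y)) ^ q`,
`y = (x - A) / R`, with `q ≥ m p'` (`p'` the conjugate exponent): integrating by parts moves
every derivative onto `φ`, `|φ⁽ᵏ⁾| ≲ R⁻ᵏ φ ^ (1 / p)`, and Young's inequality then bounds
`∫ u ^ p φ` by a constant independent of `R`. But `u ≥ 1` gives
`∫ u ^ p φ ≥ R ∫₀¹ (y (1 - y)) ^ q`, which is unbounded in `R`.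
-/

open Set Filter Polynomial

noncomputable section

theorem Real.young_inequality_weighted {p p' : ℝ} (hpq : p.HolderConjugate p') {a b ε : ℝ}
    (ha : 0 ≤ a) (hb : 0 ≤ b) (hε : 0 < ε) :
    a * b ≤ ε * a ^ p + ε ^ (1 - p') * b ^ p' := by
  set θ : ℝ := ε ^ p⁻¹
  have hθ : 0 < θ := Real.rpow_pos_of_pos hε _
  have hθa : (θ * a) ^ p = ε * a ^ p := by
    rw [Real.mul_rpow hθ.le ha, ← Real.rpow_mul hε.le, inv_mul_cancel₀ hpq.ne_zero,
      Real.rpow_one]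
  have hθb : (θ⁻¹ * b) ^ p' = ε ^ (1 - p') * b ^ p' := by
    rw [Real.mul_rpow (inv_nonneg.2 hθ.le) hb, ← Real.rpow_neg_one θ, ← Real.rpow_mul hε.le,
      ← Real.rpow_mul hε.le]
    congr 2
    field_simp [hpq.ne_zero]
    linarith [hpq.mul_eq_add]
  calc a * b = (θ * a) * (θ⁻¹ * b) := by field_simp
    _ ≤ (θ * a) ^ p / p + (θ⁻¹ * b) ^ p' / p' :=
      Real.young_inequality_of_nonneg (by positivity) (by positivity) hpq
    _ ≤ (θ * a) ^ p + (θ⁻¹ * b) ^ p' := by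
      gcongr
      · exact div_le_self (by positivity) hpq.lt.le
      · exact div_le_self (by positivity) hpq.symm.lt.le
    _ = ε * a ^ p + ε ^ (1 - p') * b ^ p' := by rw [hθa, hθb]

theorem Real.mul_pow_sub_mul_le_young {p p' : ℝ} (hpq : p.HolderConjugate p') {q k : ℕ}
    (hkq : k * p' ≤ q) {ε u z b : ℝ} (hε : 0 < ε) (hu : 0 ≤ u) (hz₀ : 0 ≤ z) (hz₁ : z ≤ 1)
    (hb : 0 ≤ b) :
    u * (z ^ (q - k) * b) ≤ ε * (u ^ p * z ^ q) + ε ^ (1 - p') * b ^ p' := by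
  have hk : (k : ℝ) ≤ q / p' := (le_div_iff₀ hpq.symm.pos).2 hkq
  have hkq' : k ≤ q := by
    have : (k : ℝ) ≤ k * p' := le_mul_of_one_le_right k.cast_nonneg hpq.symm.lt.le
    exact_mod_cast this.trans hkq
  have hexp : (q : ℝ) / p ≤ ((q - k : ℕ) : ℝ) := by
    have : (q : ℝ) / p + q / p' = q := by
      rw [div_eq_mul_inv, div_eq_mul_inv, ← mul_add, hpq.inv_add_inv_eq_one, mul_one]
    rw [Nat.cast_sub hkq']
    linarith
  have hzpow : z ^ (q - k) ≤ z ^ ((q : ℝ) / p) := by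
    rw [← Real.rpow_natCast]
    exact Real.rpow_le_rpow_of_exponent_ge' hz₀ hz₁ (div_nonneg q.cast_nonneg hpq.nonneg) hexp
  have hpow : (u * z ^ ((q : ℝ) / p)) ^ p = u ^ p * z ^ q := by
    rw [Real.mul_rpow hu (by positivity), ← Real.rpow_natCast z q, ← Real.rpow_mul hz₀,
      div_mul_cancel₀ _ hpq.ne_zero]
  calc u * (z ^ (q - k) * b) ≤ (u * z ^ ((q : ℝ) / p)) * b := by
        rw [← mul_assoc]; gcongr
    _ ≤ ε * (u * z ^ ((q : ℝ) / p)) ^ p + ε ^ (1 - p') * b ^ p' :=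
      Real.young_inequality_weighted hpq (by positivity) hb hε
    _ = ε * (u ^ p * z ^ q) + ε ^ (1 - p') * b ^ p' := by rw [hpow]

theorem Polynomial.exists_abs_eval_iterate_derivative_pow_le (P : ℝ[X]) (n j : ℕ) {K : Set ℝ}
    (hK : IsCompact K) :
    ∃ D, 0 ≤ D ∧ ∀ y ∈ K, |(derivative^[j] (P ^ n)).eval y| ≤ D * |P.eval y| ^ (n - j) := by
  obtain ⟨Q, hQ⟩ := pow_sub_dvd_iterate_derivative_pow P n j
  obtain ⟨D, hD⟩ := hK.exists_bound_of_continuousOn Q.continuousOn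
  refine ⟨max D 0, le_max_right _ _, fun y hy => ?_⟩
  rw [hQ, eval_mul, eval_pow, abs_mul, abs_pow, mul_comm]
  gcongr
  exact (hD y hy).trans (le_max_left _ _)

theorem ContDiffOn.hasDerivAt_iteratedDerivWithin {u : ℝ → ℝ} {s : Set ℝ} {n : WithTop ℕ∞}
    {j : ℕ} {x : ℝ} (hu : ContDiffOn ℝ n u s) (hs : UniqueDiffOn ℝ s) (hj : j < n)
    (hx : s ∈ nhds x) :
    HasDerivAt (iteratedDerivWithin j u s) (iteratedDerivWithin (j + 1) u s x) x := by
  rw [iteratedDerivWithin_succ]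
  exact ((hu.differentiableOn_iteratedDerivWithin hj hs) x
    (mem_of_mem_nhds hx)).hasDerivWithinAt.hasDerivAt hx

theorem intervalIntegral.integral_mul_eq_neg_one_pow_mul_of_boundary_eq_zero {A B : ℝ} :
    ∀ (k : ℕ) (V W : ℕ → ℝ → ℝ),
    (∀ j < k, ∀ x ∈ uIcc A B, HasDerivAt (V j) (V (j + 1) x) x) →
    (∀ j ≤ k, ContinuousOn (V j) (uIcc A B)) →
    (∀ j < k, ∀ x ∈ uIcc A B, HasDerivAt (W j) (W (j + 1) x) x) →
    (∀ j ≤ k, ContinuousOn (W j) (uIcc A B)) →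
    (∀ j < k, W j A = 0 ∧ W j B = 0) →
    ∫ x in A..B, V k x * W 0 x = (-1 : ℝ) ^ k * ∫ x in A..B, V 0 x * W k x := by
  intro k
  induction k with
  | zero => intro V W _ _ _ _ _; simp
  | succ k ih =>
    intro V W hV hVc hW hWc hW0
    have hparts := integral_mul_deriv_eq_deriv_mul (u := W 0) (u' := W 1) (v := V k)
      (v' := V (k + 1)) (fun x hx => hW 0 (by omega) x hx) (fun x hx => hV k (by omega) x hx)
      (hWc 1 (by omega)).intervalIntegrable (hVc (k + 1) le_rfl).intervalIntegrable
    have hshift := ih V (fun j => W (j + 1)) (fun j hj => hV j (by omega))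
      (fun j hj => hVc j (by omega)) (fun j hj => hW (j + 1) (by omega))
      (fun j hj => hWc (j + 1) (by omega)) (fun j hj => hW0 (j + 1) (by omega))
    simp only [mul_comm (V _ _) (W _ _)] at hshift ⊢
    rw [hparts, (hW0 0 (by omega)).1, (hW0 0 (by omega)).2, hshift]
    ring

theorem Polynomial.eval_iterate_derivative_pow_eq_zero {P : ℝ[X]} {n j : ℕ} {y : ℝ}
    (hy : P.eval y = 0) (hj : j < n) : (derivative^[j] (P ^ n)).eval y = 0 := by
  obtain ⟨Q, hQ⟩ := pow_sub_dvd_iterate_derivative_pow P n j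
  rw [hQ, eval_mul, eval_pow, hy, zero_pow (by omega), zero_mul]

def bump (q : ℕ) : ℝ[X] := (X * (1 - X)) ^ q

lemma eval_bump (q : ℕ) (y : ℝ) : (bump q).eval y = (y * (1 - y)) ^ q := by
  simp [bump]

lemma integral_bump_pos (q : ℕ) : 0 < ∫ y in (0 : ℝ)..1, (bump q).eval y :=
  intervalIntegral.intervalIntegral_pos_of_pos_on ((bump q).continuous.intervalIntegrable _ _)
    (fun y hy => by rw [eval_bump]; exact pow_pos (mul_pos hy.1 (by linarith [hy.2])) q)
    one_pos

/-- The `j`-th derivative of `x ↦ (bump q).eval ((x - A) / R)`, a bump supported on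
`[A, A + R]`. -/
def rescaledBump (q : ℕ) (A R : ℝ) (j : ℕ) (x : ℝ) : ℝ :=
  R⁻¹ ^ j * (derivative^[j] (bump q)).eval ((x - A) / R)

section rescaledBump

variable {q : ℕ} {A R : ℝ}

lemma hasDerivAt_rescaledBump (j : ℕ) (x : ℝ) :
    HasDerivAt (rescaledBump q A R j) (rescaledBump q A R (j + 1) x) x := by
  have hlin : HasDerivAt (fun x : ℝ => (x - A) / R) R⁻¹ x := by
    simpa using ((hasDerivAt_id x).sub_const A).div_const R
  refine ((((derivative^[j] (bump q)).hasDerivAt _).comp x hlin).const_mul (R⁻¹ ^ j)).congr_deriv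
    ?_
  rw [rescaledBump, Function.iterate_succ_apply', pow_succ]
  ring

lemma continuous_rescaledBump (j : ℕ) : Continuous (rescaledBump q A R j) :=
  continuous_const.mul ((Polynomial.continuous _).comp
    ((continuous_id.sub continuous_const).div_const R))

lemma rescaledBump_zero_apply (x : ℝ) :
    rescaledBump q A R 0 x = ((x - A) / R * (1 - (x - A) / R)) ^ q := by
  simp [rescaledBump, eval_bump]

lemma rescaledBump_left_eq_zero {j : ℕ} (hj : j < q) : rescaledBump q A R j A = 0 := by
  rw [rescaledBump, bump, sub_self, zero_div,
    Polynomial.eval_iterate_derivative_pow_eq_zero (by simp) hj, mul_zero]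

lemma rescaledBump_right_eq_zero (hR : R ≠ 0) {j : ℕ} (hj : j < q) :
    rescaledBump q A R j (A + R) = 0 := by
  rw [rescaledBump, bump, add_sub_cancel_left, div_self hR,
    Polynomial.eval_iterate_derivative_pow_eq_zero (by simp) hj, mul_zero]

lemma sub_div_mem_Icc_zero_one (hR : 0 < R) {x : ℝ} (hx : x ∈ Icc A (A + R)) :
    (x - A) / R ∈ Icc (0 : ℝ) 1 :=
  ⟨div_nonneg (by linarith [hx.1]) hR.le, (div_le_one hR).2 (by linarith [hx.2])⟩

lemma rescaledBump_zero_nonneg (hR : 0 < R) {x : ℝ} (hx : x ∈ Icc A (A + R)) :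
    0 ≤ rescaledBump q A R 0 x := by
  obtain ⟨hy₀, hy₁⟩ := sub_div_mem_Icc_zero_one hR hx
  rw [rescaledBump_zero_apply]
  exact pow_nonneg (mul_nonneg hy₀ (by linarith)) q

lemma integral_rescaledBump_zero (hR : R ≠ 0) :
    ∫ x in A..A + R, rescaledBump q A R 0 x = R * ∫ y in (0 : ℝ)..1, (bump q).eval y := by
  have h := intervalIntegral.integral_comp_div_sub (fun y => (bump q).eval y) hR (A / R)
    (a := A) (b := A + R)
  simp only [sub_self, add_div, div_self hR, add_sub_cancel_left, smul_eq_mul] at h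
  rw [← h]
  refine intervalIntegral.integral_congr fun x _ => ?_
  simp [rescaledBump, sub_div]

lemma mul_integral_bump_le_integral_mul_rescaledBump (hR : 0 < R) {g : ℝ → ℝ}
    (hg : ContinuousOn g (Icc A (A + R))) (hg₁ : ∀ x ∈ Icc A (A + R), 1 ≤ g x) :
    R * ∫ y in (0 : ℝ)..1, (bump q).eval y ≤ ∫ x in A..A + R, g x * rescaledBump q A R 0 x := by
  have hAR : A ≤ A + R := by linarith
  rw [← integral_rescaledBump_zero hR.ne']
  refine intervalIntegral.integral_mono_on hAR ((continuous_rescaledBump 0).intervalIntegrable _ _)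
    ?_ fun x hx => le_mul_of_one_le_left (rescaledBump_zero_nonneg hR hx) (hg₁ x hx)
  exact (hg.mul (continuous_rescaledBump 0).continuousOn).intervalIntegrable_of_Icc hAR

end rescaledBump

section testFunctionEstimate

variable {p p' : ℝ} {q : ℕ} {A R : ℝ} {V : ℕ → ℝ → ℝ}

lemma inv_pow_mul_rpow_le (hR : 1 ≤ R) {D : ℝ} (hD : 0 ≤ D) (hp' : 1 ≤ p') {k : ℕ}
    (hk : k ≠ 0) : (R⁻¹ ^ k * D) ^ p' ≤ R⁻¹ * D ^ p' := by
  have hr₀ : 0 ≤ R⁻¹ ^ k := by positivity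
  have hr₁ : R⁻¹ ^ k ≤ 1 := pow_le_one₀ (by positivity) (inv_le_one_of_one_le₀ hR)
  rw [Real.mul_rpow hr₀ hD]
  gcongr
  calc (R⁻¹ ^ k) ^ p' ≤ (R⁻¹ ^ k) ^ (1 : ℝ) :=
        Real.rpow_le_rpow_of_exponent_ge' hr₀ hr₁ zero_le_one hp'
    _ ≤ R⁻¹ := by
      rw [Real.rpow_one]
      exact pow_le_of_le_one (by positivity) (inv_le_one_of_one_le₀ hR) hk

theorem abs_integral_mul_rescaledBump_le (hpq : p.HolderConjugate p') {k : ℕ} (hk : 1 ≤ k)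
    (hkq : k * p' ≤ q) {D ε : ℝ}
    (hD : ∀ y ∈ Icc (0 : ℝ) 1,
      |(derivative^[k] (bump q)).eval y| ≤ D * |(X * (1 - X) : ℝ[X]).eval y| ^ (q - k))
    (hD₀ : 0 ≤ D) (hε : 0 < ε) (hR : 1 ≤ R)
    (hVd : ∀ j < k, ∀ x ∈ Icc A (A + R), HasDerivAt (V j) (V (j + 1) x) x)
    (hVc : ∀ j ≤ k, ContinuousOn (V j) (Icc A (A + R)))
    (hV₀ : ∀ x ∈ Icc A (A + R), 0 ≤ V 0 x) :
    |∫ x in A..A + R, V k x * rescaledBump q A R 0 x|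
      ≤ ε * (∫ x in A..A + R, V 0 x ^ p * rescaledBump q A R 0 x) + ε ^ (1 - p') * D ^ p' := by
  have hR₀ : 0 < R := by linarith
  have hAR : A ≤ A + R := by linarith
  have hkq' : k < q := by
    have : (k : ℝ) < k * p' := lt_mul_of_one_lt_right (by exact_mod_cast hk) hpq.symm.lt
    exact_mod_cast this.trans_le hkq
  have hparts := intervalIntegral.integral_mul_eq_neg_one_pow_mul_of_boundary_eq_zero k V
    (rescaledBump q A R) (by rwa [uIcc_of_le hAR]) (by rwa [uIcc_of_le hAR])
    (fun j _ x _ => hasDerivAt_rescaledBump j x)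
    (fun j _ => (continuous_rescaledBump j).continuousOn)
    (fun j hj => ⟨rescaledBump_left_eq_zero (by omega),
      rescaledBump_right_eq_zero hR₀.ne' (by omega)⟩)
  have hpoint : ∀ x ∈ Icc A (A + R), |V 0 x * rescaledBump q A R k x|
      ≤ ε * (V 0 x ^ p * rescaledBump q A R 0 x) + ε ^ (1 - p') * D ^ p' * R⁻¹ := by
    intro x hx
    obtain ⟨hy₀, hy₁⟩ := sub_div_mem_Icc_zero_one hR₀ hx
    set y := (x - A) / R
    have hz₀ : 0 ≤ y * (1 - y) := mul_nonneg hy₀ (by linarith)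
    have hbump : |rescaledBump q A R k x| ≤ (y * (1 - y)) ^ (q - k) * (R⁻¹ ^ k * D) := by
      have := hD y ⟨hy₀, hy₁⟩
      rw [eval_mul, eval_X, eval_sub, eval_one, eval_X, abs_of_nonneg hz₀] at this
      rw [rescaledBump, abs_mul, abs_of_nonneg (by positivity)]
      calc R⁻¹ ^ k * |(derivative^[k] (bump q)).eval y|
          ≤ R⁻¹ ^ k * (D * (y * (1 - y)) ^ (q - k)) := by gcongr
        _ = (y * (1 - y)) ^ (q - k) * (R⁻¹ ^ k * D) := by ring
    calc |V 0 x * rescaledBump q A R k x| = V 0 x * |rescaledBump q A R k x| := by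
          rw [abs_mul, abs_of_nonneg (hV₀ x hx)]
      _ ≤ V 0 x * ((y * (1 - y)) ^ (q - k) * (R⁻¹ ^ k * D)) := by
          gcongr
          exact hV₀ x hx
      _ ≤ ε * (V 0 x ^ p * (y * (1 - y)) ^ q) + ε ^ (1 - p') * (R⁻¹ ^ k * D) ^ p' :=
          Real.mul_pow_sub_mul_le_young hpq hkq hε (hV₀ x hx) hz₀ (by nlinarith) (by positivity)
      _ ≤ ε * (V 0 x ^ p * rescaledBump q A R 0 x) + ε ^ (1 - p') * D ^ p' * R⁻¹ := by
          rw [rescaledBump_zero_apply, mul_assoc (ε ^ (1 - p')), mul_comm (D ^ p')]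
          gcongr
          exact inv_pow_mul_rpow_le hR hD₀ hpq.symm.lt.le (by omega)
  have hI : IntervalIntegrable (fun x => V 0 x ^ p * rescaledBump q A R 0 x)
      MeasureTheory.volume A (A + R) :=
    (((hVc 0 (Nat.zero_le _)).rpow_const fun _ _ => Or.inr hpq.nonneg).mul
      (continuous_rescaledBump 0).continuousOn).intervalIntegrable_of_Icc hAR
  have habs : IntervalIntegrable (fun x => |V 0 x * rescaledBump q A R k x|)
      MeasureTheory.volume A (A + R) :=
    (((hVc 0 (Nat.zero_le _)).mul (continuous_rescaledBump k).continuousOn).abs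
      ).intervalIntegrable_of_Icc hAR
  calc |∫ x in A..A + R, V k x * rescaledBump q A R 0 x|
      = |∫ x in A..A + R, V 0 x * rescaledBump q A R k x| := by
        rw [hparts, abs_mul, abs_pow, abs_neg, abs_one, one_pow, one_mul]
    _ ≤ ∫ x in A..A + R, |V 0 x * rescaledBump q A R k x| :=
        intervalIntegral.abs_integral_le_integral_abs hAR
    _ ≤ ∫ x in A..A + R,
          (ε * (V 0 x ^ p * rescaledBump q A R 0 x) + ε ^ (1 - p') * D ^ p' * R⁻¹) :=
        intervalIntegral.integral_mono_on hAR habs (hI.const_mul ε |>.add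
          intervalIntegrable_const) hpoint
    _ = ε * (∫ x in A..A + R, V 0 x ^ p * rescaledBump q A R 0 x) + ε ^ (1 - p') * D ^ p' := by
        rw [intervalIntegral.integral_add (hI.const_mul ε) intervalIntegrable_const,
          intervalIntegral.integral_const_mul, intervalIntegral.integral_const, smul_eq_mul,
          add_sub_cancel_left]
        field_simp

lemma integral_rpow_mul_rescaledBump_le_sum (hp : 0 ≤ p) {m : ℕ} {a : ℕ → ℝ} (hR : 0 < R)
    (hVc : ∀ j ≤ m, ContinuousOn (V j) (Icc A (A + R)))
    (hV : ∀ x ∈ Icc A (A + R), V 0 x ^ p ≤ ∑ k ∈ Finset.Icc 1 m, a k * V k x) :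
    ∫ x in A..A + R, V 0 x ^ p * rescaledBump q A R 0 x
      ≤ ∑ k ∈ Finset.Icc 1 m, a k * ∫ x in A..A + R, V k x * rescaledBump q A R 0 x := by
  have hAR : A ≤ A + R := by linarith
  have hint : ∀ k ∈ Finset.Icc 1 m, IntervalIntegrable
      (fun x => a k * (V k x * rescaledBump q A R 0 x)) MeasureTheory.volume A (A + R) :=
    fun k hk => (continuousOn_const.mul ((hVc k (Finset.mem_Icc.1 hk).2).mul
      (continuous_rescaledBump 0).continuousOn)).intervalIntegrable_of_Icc hAR
  calc ∫ x in A..A + R, V 0 x ^ p * rescaledBump q A R 0 x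
      ≤ ∫ x in A..A + R, ∑ k ∈ Finset.Icc 1 m, a k * (V k x * rescaledBump q A R 0 x) := by
        refine intervalIntegral.integral_mono_on hAR ?_
          ((IntervalIntegrable.sum _ hint).congr fun x _ => by simp) fun x hx => ?_
        · exact (((hVc 0 (Nat.zero_le _)).rpow_const fun _ _ => Or.inr hp).mul
            (continuous_rescaledBump 0).continuousOn).intervalIntegrable_of_Icc hAR
        · simp_rw [← mul_assoc, ← Finset.sum_mul]
          exact mul_le_mul_of_nonneg_right (hV x hx) (rescaledBump_zero_nonneg hR hx)
    _ = ∑ k ∈ Finset.Icc 1 m, a k * ∫ x in A..A + R, V k x * rescaledBump q A R 0 x := by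
        rw [intervalIntegral.integral_finsetSum hint]
        simp_rw [intervalIntegral.integral_const_mul]

end testFunctionEstimate

theorem exists_integral_rpow_mul_rescaledBump_le {p p' : ℝ} (hpq : p.HolderConjugate p')
    {m q : ℕ} (hmq : m * p' ≤ q) (a : ℕ → ℝ) :
    ∃ C, ∀ A R : ℝ, 1 ≤ R → ∀ V : ℕ → ℝ → ℝ,
      (∀ j < m, ∀ x ∈ Icc A (A + R), HasDerivAt (V j) (V (j + 1) x) x) →
      (∀ j ≤ m, ContinuousOn (V j) (Icc A (A + R))) →
      (∀ x ∈ Icc A (A + R), 0 ≤ V 0 x) →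
      (∀ x ∈ Icc A (A + R), V 0 x ^ p ≤ ∑ k ∈ Finset.Icc 1 m, a k * V k x) →
      ∫ x in A..A + R, V 0 x ^ p * rescaledBump q A R 0 x ≤ C := by
  choose D hD₀ hD using fun k => (X * (1 - X) : ℝ[X]).exists_abs_eval_iterate_derivative_pow_le
    q k (isCompact_Icc : IsCompact (Icc (0 : ℝ) 1))
  set S := ∑ k ∈ Finset.Icc 1 m, |a k|
  set ε : ℝ := (2 * (S + 1))⁻¹
  have hS : 0 ≤ S := Finset.sum_nonneg fun _ _ => abs_nonneg _
  have hε : 0 < ε := by positivity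
  have hSε : S * ε ≤ 1 / 2 := by
    rw [← div_eq_mul_inv, div_le_iff₀ (by positivity)]
    linarith
  set K := ∑ k ∈ Finset.Icc 1 m, |a k| * (ε ^ (1 - p') * D k ^ p')
  refine ⟨2 * K, fun A R hR V hVd hVc hV₀ hV => ?_⟩
  set I := ∫ x in A..A + R, V 0 x ^ p * rescaledBump q A R 0 x
  have hAR : A ≤ A + R := by linarith
  have hI₀ : 0 ≤ I := intervalIntegral.integral_nonneg hAR fun x hx =>
    mul_nonneg (Real.rpow_nonneg (hV₀ x hx) p) (rescaledBump_zero_nonneg (by linarith) hx)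
  have hterm : ∀ k ∈ Finset.Icc 1 m, a k * ∫ x in A..A + R, V k x * rescaledBump q A R 0 x
      ≤ |a k| * (ε * I + ε ^ (1 - p') * D k ^ p') := by
    intro k hk
    obtain ⟨hk₁, hkm⟩ := Finset.mem_Icc.1 hk
    have hkq : k * p' ≤ q :=
      (mul_le_mul_of_nonneg_right (by exact_mod_cast hkm) hpq.symm.nonneg).trans hmq
    refine (le_abs_self _).trans ?_
    rw [abs_mul]
    gcongr
    exact abs_integral_mul_rescaledBump_le hpq hk₁ hkq (hD k) (hD₀ k) hε hR
      (fun j hj => hVd j (by omega)) (fun j hj => hVc j (by omega)) hV₀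
  have hsum : ∑ k ∈ Finset.Icc 1 m, |a k| * (ε * I + ε ^ (1 - p') * D k ^ p')
      = S * ε * I + K := by
    simp only [mul_add, Finset.sum_add_distrib, S, K, Finset.sum_mul]
    congr 1
    exact Finset.sum_congr rfl fun _ _ => by ring
  have hI_le : I ≤ ∑ k ∈ Finset.Icc 1 m, a k * ∫ x in A..A + R, V k x * rescaledBump q A R 0 x :=
    integral_rpow_mul_rescaledBump_le_sum hpq.nonneg (by linarith) hVc hV
  nlinarith [Finset.sum_le_sum hterm]

theorem no_blowup_to_infinity_general
    (f : ℝ → ℝ → ℝ)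
    (p : ℝ) (hp : 1 < p) (s₀ : ℝ)
    (hgrowth : ∀ t : ℝ, ∀ s : ℝ, s₀ ≤ s → s ^ p ≤ f t s)
    (m : ℕ) (a : ℕ → ℝ) (t₀ : ℝ)
    (u : ℝ → ℝ) (hu : ContDiffOn ℝ m u (Set.Ici t₀))
    (heq : ∀ t : ℝ, t₀ ≤ t →
      ∑ k ∈ Finset.Icc 1 m, a k * iteratedDerivWithin k u (Set.Ici t₀) t = f t (u t)) :
    ¬ Filter.Tendsto u Filter.atTop Filter.atTop := by
  intro htend
  have hpq := Real.HolderConjugate.conjExponent hp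
  obtain ⟨q, hq⟩ := exists_nat_ge (m * p.conjExponent)
  obtain ⟨C, hC⟩ := exists_integral_rpow_mul_rescaledBump_le hpq hq a
  obtain ⟨T, hT⟩ := eventually_atTop.1 (htend.eventually_ge_atTop (max s₀ 1))
  set A := max T (t₀ + 1)
  set c := ∫ y in (0 : ℝ)..1, (bump q).eval y
  have hc : 0 < c := integral_bump_pos q
  set R := max 1 (C / c + 1)
  have hR : 1 ≤ R := le_max_left _ _
  have hA : ∀ x ∈ Icc A (A + R), t₀ < x ∧ max s₀ 1 ≤ u x := fun x hx =>
    ⟨by linarith [le_max_right T (t₀ + 1), hx.1], hT x (by linarith [le_max_left T (t₀ + 1), hx.1])⟩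
  set V := fun j => iteratedDerivWithin j u (Ici t₀)
  have hV₀ : V 0 = u := iteratedDerivWithin_zero
  have hVc : ∀ j ≤ m, ContinuousOn (V j) (Icc A (A + R)) := fun j hj =>
    (hu.continuousOn_iteratedDerivWithin (by exact_mod_cast hj) (uniqueDiffOn_Ici t₀)).mono
      fun x hx => (hA x hx).1.le
  have hupper := hC A R hR V
    (fun j hj x hx => hu.hasDerivAt_iteratedDerivWithin (uniqueDiffOn_Ici t₀)
      (by exact_mod_cast hj) (Ici_mem_nhds (hA x hx).1))
    hVc (fun x hx => by rw [hV₀]; linarith [le_max_right s₀ 1, (hA x hx).2])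
    (fun x hx => by
      rw [hV₀, heq x (hA x hx).1.le]
      exact hgrowth x (u x) (le_of_max_le_left (hA x hx).2))
  have hlower : R * c ≤ ∫ x in A..A + R, V 0 x ^ p * rescaledBump q A R 0 x :=
    mul_integral_bump_le_integral_mul_rescaledBump (by linarith)
    ((hVc 0 (Nat.zero_le _)).rpow_const fun _ _ => Or.inr (by linarith))
    (fun x hx => by
      rw [hV₀]
      exact Real.one_le_rpow (le_of_max_le_right (hA x hx).2) (by linarith))
  nlinarith [le_max_right 1 (C / c + 1), div_mul_cancel₀ C hc.ne']

/-- (Mitidieri–Pohozaev type lemma.)  Let `f : ℝ × ℝ → ℝ` be continuous with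
`f(t,s) ≥ s^p` for some `p > 1` and all large `s`.  If `u` is a `C^m` function on
`[t₀, ∞)` satisfying the ODE `Σ_{k=1}^m a_k u^{(k)}(t) = f(t, u(t))`, then `u(t)`
cannot tend to `+∞` as `t → ∞`. -/
theorem no_blowup_to_infinity
    (f : ℝ → ℝ → ℝ) (hf : Continuous fun p : ℝ × ℝ => f p.1 p.2)
    (p : ℝ) (hp : 1 < p) (s₀ : ℝ) (hs₀ : 0 < s₀)
    (hgrowth : ∀ t : ℝ, ∀ s : ℝ, s₀ ≤ s → s ^ p ≤ f t s)
    (m : ℕ) (hm : 1 ≤ m) (a : ℕ → ℝ) (t₀ : ℝ)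
    (u : ℝ → ℝ) (hu : ContDiffOn ℝ m u (Set.Ici t₀))
    (heq : ∀ t : ℝ, t₀ ≤ t →
      ∑ k ∈ Finset.Icc 1 m, a k * iteratedDerivWithin k u (Set.Ici t₀) t = f t (u t)) :
    ¬ Filter.Tendsto u Filter.atTop Filter.atTop :=
  no_blowup_to_infinity_general f p hp s₀ hgrowth m a t₀ u hu heq
end
end

section
/- Let α > −2, let N ≥ 3 be an integer, let 0 < R ≤ ∞, and let (u, v) be a radial solution of Δ²u = |x|^α e^u on [0, R) normalized by u(0) = 0. Then u(r) ≥ (v(0)/(2N)) r² for every r ∈ [0, R). -/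
/-!
Multiplying by `r^(N-1)` puts the radial Laplacian in divergence form,
`r^(N-1) Δf = (r^(N-1) f')'`, so a lower bound `Δf ≥ c` makes the flux `r^(N-1) f' - c r^N / N`
nondecreasing; it vanishes at `r = 0`, whence `f' ≥ c r / N`. Since `Δv = r^α e^u ≥ 0`, this
makes `v` nondecreasing, so `Δu = v ≥ v(0)`, hence `u' ≥ v(0) r / N`, and integrating gives
`u ≥ v(0) r² / (2N)`.
-/

open Set Filter Topology

/-- The Laplacian of `x ↦ f ‖x‖` on `ℝ^N`, as a function of the radius. -/
noncomputable def radialLaplacian (N : ℕ) (f : ℝ → ℝ) (r : ℝ) : ℝ :=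
  deriv (deriv f) r + ((N : ℝ) - 1) * deriv f r / r

lemma monotoneOn_Icc_of_hasDerivAt_nonneg {a b : ℝ} {f f' : ℝ → ℝ}
    (hf : ContinuousOn f (Icc a b)) (hf' : ∀ x ∈ Ioo a b, HasDerivAt f (f' x) x)
    (hf'₀ : ∀ x ∈ Ioo a b, 0 ≤ f' x) : MonotoneOn f (Icc a b) :=
  monotoneOn_of_hasDerivWithinAt_nonneg (convex_Icc a b) hf
    (fun x hx ↦ (hf' x (by rwa [interior_Icc] at hx)).hasDerivWithinAt)
    (fun x hx ↦ hf'₀ x (by rwa [interior_Icc] at hx))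

lemma ContDiffOn.hasDerivAt_deriv_deriv {f : ℝ → ℝ} {s : Set ℝ} {x : ℝ}
    (hf : ContDiffOn ℝ 2 f s) (hs : s ∈ 𝓝 x) :
    HasDerivAt f (deriv f x) x ∧ HasDerivAt (deriv f) (deriv (deriv f) x) x := by
  have hx : interior s ∈ 𝓝 x := isOpen_interior.mem_nhds (mem_interior_iff_mem_nhds.2 hs)
  have hf' := hf.mono interior_subset
  exact ⟨((hf'.differentiableOn two_ne_zero).differentiableAt hx).hasDerivAt,
    (((hf'.deriv_of_isOpen isOpen_interior (by norm_num)).differentiableOn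
      one_ne_zero).differentiableAt hx).hasDerivAt⟩

lemma hasDerivAt_pow_mul_deriv_radialLaplacian {N : ℕ} (hN : 1 ≤ N) {f : ℝ → ℝ} {x : ℝ}
    (hx : x ≠ 0) (hf' : HasDerivAt (deriv f) (deriv (deriv f) x) x) :
    HasDerivAt (fun y ↦ y ^ (N - 1) * deriv f y) (x ^ (N - 1) * radialLaplacian N f x) x := by
  refine ((hasDerivAt_pow (N - 1) x).fun_mul hf').congr_deriv ?_
  obtain ⟨n, rfl⟩ := Nat.exists_eq_add_of_le' hN
  rcases n with _ | n
  · simp [radialLaplacian]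
  · simp only [radialLaplacian, Nat.add_sub_cancel, pow_succ]
    push_cast
    field_simp
    ring

lemma le_deriv_of_le_radialLaplacian {N : ℕ} (hN : 2 ≤ N) {b c : ℝ} (hb : 0 < b)
    {f : ℝ → ℝ} (hf : ContDiffOn ℝ 2 f (Icc 0 b))
    (hc : ∀ x ∈ Ioo 0 b, c ≤ radialLaplacian N f x) :
    ∀ x ∈ Ioo 0 b, c / N * x ≤ deriv f x := by
  have hN₀ : (N : ℝ) ≠ 0 := by norm_cast; omega
  set flux := fun y ↦ y ^ (N - 1) * derivWithin f (Icc 0 b) y - c / N * y ^ N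
  have hflux : ∀ x ∈ Ioo 0 b,
      HasDerivAt flux (x ^ (N - 1) * (radialLaplacian N f x - c)) x := fun x hx ↦ by
    have hf'_eq : (fun y ↦ y ^ (N - 1) * derivWithin f (Icc 0 b) y)
        =ᶠ[𝓝 x] fun y ↦ y ^ (N - 1) * deriv f y := by
      filter_upwards [isOpen_Ioo.mem_nhds hx] with y hy
      rw [derivWithin_of_mem_nhds (Icc_mem_nhds hy.1 hy.2)]
    refine ((hasDerivAt_pow_mul_deriv_radialLaplacian (by omega) hx.1.ne'
      (hf.hasDerivAt_deriv_deriv (Icc_mem_nhds hx.1 hx.2)).2).congr_of_eventuallyEq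
      hf'_eq |>.sub ((hasDerivAt_pow N x).const_mul (c / N))).congr_deriv ?_
    field_simp
  have hmono : MonotoneOn flux (Icc 0 b) :=
    monotoneOn_Icc_of_hasDerivAt_nonneg
      (((continuous_pow _).continuousOn.mul
        (hf.continuousOn_derivWithin (uniqueDiffOn_Icc hb) one_le_two)).sub (by fun_prop))
      hflux (fun x hx ↦ mul_nonneg (pow_nonneg hx.1.le _) (sub_nonneg.2 (hc x hx)))
  intro x hx
  have hpow : x ^ N = x ^ (N - 1) * x := by rw [← pow_succ, Nat.sub_add_cancel (by omega)]
  have h := hmono (left_mem_Icc.2 hb.le) (Ioo_subset_Icc_self hx) hx.1.le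
  simp only [flux, derivWithin_of_mem_nhds (Icc_mem_nhds hx.1 hx.2),
    zero_pow (show N - 1 ≠ 0 by omega), zero_pow (show N ≠ 0 by omega), hpow] at h
  refine le_of_mul_le_mul_left ?_ (pow_pos hx.1 (N - 1))
  linarith

lemma add_mul_sq_le_of_le_radialLaplacian {N : ℕ} (hN : 2 ≤ N) {b c : ℝ} (hb : 0 < b)
    {f : ℝ → ℝ} (hf : ContDiffOn ℝ 2 f (Icc 0 b))
    (hc : ∀ x ∈ Ioo 0 b, c ≤ radialLaplacian N f x) :
    ∀ x ∈ Icc 0 b, f 0 + c / (2 * N) * x ^ 2 ≤ f x := by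
  have hmono : MonotoneOn (fun x ↦ f x - c / (2 * N) * x ^ 2) (Icc 0 b) :=
    monotoneOn_Icc_of_hasDerivAt_nonneg (hf.continuousOn.sub (by fun_prop))
      (fun x hx ↦ (hf.hasDerivAt_deriv_deriv (Icc_mem_nhds hx.1 hx.2)).1.sub
        ((hasDerivAt_pow 2 x).const_mul _)) fun x hx ↦ by
        rw [show c / (2 * N) * ((2 : ℕ) * x ^ (2 - 1)) = c / N * x by push_cast; ring]
        linarith [le_deriv_of_le_radialLaplacian hN hb hf hc x hx]
  intro x hx
  have := hmono (left_mem_Icc.2 hb.le) hx hx.1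
  simp only at this
  linarith

theorem lower_bound_radial_solution_general
    (N : ℕ) (hN : 3 ≤ N) (α : ℝ)
    (R : EReal) (u v : ℝ → ℝ)
    (hu : ContDiffOn ℝ 2 u {r : ℝ | 0 ≤ r ∧ (r : EReal) < R})
    (hv : ContDiffOn ℝ 2 v {r : ℝ | 0 ≤ r ∧ (r : EReal) < R})
    (hu0 : u 0 = 0)
    (heq1 : ∀ r : ℝ, 0 < r → (r : EReal) < R →
      deriv (deriv u) r + ((N : ℝ) - 1) * deriv u r / r = v r)
    (heq2 : ∀ r : ℝ, 0 < r → (r : EReal) < R →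
      deriv (deriv v) r + ((N : ℝ) - 1) * deriv v r / r = r ^ α * Real.exp (u r)) :
    ∀ r : ℝ, 0 ≤ r → (r : EReal) < R → v 0 / (2 * N) * r ^ 2 ≤ u r := by
  intro r hr hrR
  obtain rfl | hr := hr.eq_or_lt
  · simp [hu0]
  have hI : Icc 0 r ⊆ {r : ℝ | 0 ≤ r ∧ (r : EReal) < R} := fun x hx ↦
    ⟨hx.1, (EReal.coe_le_coe_iff.2 hx.2).trans_lt hrR⟩
  have hxR (x : ℝ) (hx : x ∈ Ioo 0 r) : (x : EReal) < R := (hI (Ioo_subset_Icc_self hx)).2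
  have hv_ge : ∀ x ∈ Icc 0 r, v 0 ≤ v x := by
    simpa using add_mul_sq_le_of_le_radialLaplacian (N := N) (c := 0) (by omega) hr (hv.mono hI)
      fun x hx ↦ by
        rw [radialLaplacian, heq2 x hx.1 (hxR x hx)]
        exact mul_nonneg (Real.rpow_nonneg hx.1.le α) (Real.exp_pos _).le
  simpa [hu0] using add_mul_sq_le_of_le_radialLaplacian (by omega) hr (hu.mono hI)
    (fun x hx ↦ by
      rw [radialLaplacian, heq1 x hx.1 (hxR x hx)]
      exact hv_ge x (Ioo_subset_Icc_self hx)) r (right_mem_Icc.2 hr.le)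

/-- Lower bound for radial solutions of `Δ²u = |x|^α e^u` on `[0, R)` (with
`R ∈ (0, ∞]` an extended real) normalized by `u(0) = 0`:
`u(r) ≥ (v(0)/(2N)) r²` on `[0, R)`.  Here `v` plays the role of `Δu`, the pair
`(u, v)` is `C²` on `[0, R)` with `u(0) = 0`, `u′(0) = v′(0) = 0` (one-sided
derivatives), and satisfies `u″ + (N-1)u′/r = v`, `v″ + (N-1)v′/r = r^α e^u` on
`(0, R)`. -/
theorem lower_bound_radial_solution
    (N : ℕ) (hN : 3 ≤ N) (α : ℝ) (hα : -2 < α)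
    (R : EReal) (hR : 0 < R) (u v : ℝ → ℝ)
    (hu : ContDiffOn ℝ 2 u {r : ℝ | 0 ≤ r ∧ (r : EReal) < R})
    (hv : ContDiffOn ℝ 2 v {r : ℝ | 0 ≤ r ∧ (r : EReal) < R})
    (hu0 : u 0 = 0)
    (hu' : derivWithin u {r : ℝ | 0 ≤ r ∧ (r : EReal) < R} 0 = 0)
    (hv' : derivWithin v {r : ℝ | 0 ≤ r ∧ (r : EReal) < R} 0 = 0)
    (heq1 : ∀ r : ℝ, 0 < r → (r : EReal) < R →
      deriv (deriv u) r + ((N : ℝ) - 1) * deriv u r / r = v r)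
    (heq2 : ∀ r : ℝ, 0 < r → (r : EReal) < R →
      deriv (deriv v) r + ((N : ℝ) - 1) * deriv v r / r = r ^ α * Real.exp (u r)) :
    ∀ r : ℝ, 0 ≤ r → (r : EReal) < R → v 0 / (2 * N) * r ^ 2 ≤ u r :=
  lower_bound_radial_solution_general N hN α R u v hu hv hu0 heq1 heq2
end

section
/- Let N = 3, α > −2, and let (u, v) be an entire radial solution of Δ²u = |x|^α e^u normalized by u(0) = 0 such that lim_{r→∞} v(r) = 0 (equivalently, v(0) = β₀). Then the integrals A_k := ∫₀^∞ s^{k+α} e^{u(s)} ds are finite for k = 2, 3, 4, and there exist constants c > 0 and C > 0 such that for all r ≥ 1: |u(r) − a₁ r − a₂ − a₃/r| ≤ C e^{−c r}, where a₁ = −A₂/2, a₂ = A₃/2 and a₃ = −A₄/6. -/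
open MeasureTheory Real Set Filter

noncomputable section

/-!
In dimension three `Δw = (r w)''/r`, so with `V = r v`, `W = V'`, `U = r u`, `P = U'` the system
reads `W' = r^{1+α} e^u`, `P' = V`. As `W` increases and `V/r = v → 0`, `W < 0`; hence `V`
decreases, `U` lies below a concave quadratic and `u ≤ C₀ - m r`. The source then has exponentially
small tails, and `W = -∫_r^∞ t^{1+α} e^u`, again because `v → 0`. Three more integrations, with the
constants fixed at `r = 0` by the moments `A_k`, give `r u = R - A₂ r²/2 + A₃ r/2 - A₄/6` where
`R(r) = ∫_r^∞ (t - r)³/6 · t^{1+α} e^{u(t)} dt = O(e^{-cr})`.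
-/

open Topology

section TailIntegral

variable {φ : ℝ → ℝ} {a : ℝ}

lemma integral_Ioi_eq_sub_intervalIntegral (hφ : IntegrableOn φ (Ioi a)) {x : ℝ} (hx : a ≤ x) :
    ∫ t in Ioi x, φ t = (∫ t in Ioi a, φ t) - ∫ t in a..x, φ t := by
  rw [← intervalIntegral.integral_Ioi_sub_Ioi hφ hx]
  ring

lemma hasDerivAt_integral_Ioi (hφ : IntegrableOn φ (Ioi a)) {r : ℝ} (har : a < r)
    (hr : ContinuousAt φ r) : HasDerivAt (fun x => ∫ t in Ioi x, φ t) (-φ r) r := by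
  have hint : IntervalIntegrable φ volume a r :=
    (intervalIntegrable_iff_integrableOn_Ioc_of_le har.le).2 (hφ.mono_set Ioc_subset_Ioi_self)
  have hmeas : StronglyMeasurableAtFilter φ (𝓝 r) :=
    ⟨Ioi a, Ioi_mem_nhds har, hφ.aestronglyMeasurable⟩
  refine (((intervalIntegral.integral_hasDerivAt_right hint hmeas hr).const_sub
    (∫ t in Ioi a, φ t))).congr_of_eventuallyEq ?_
  filter_upwards [Ioi_mem_nhds har] with x hx using integral_Ioi_eq_sub_intervalIntegral hφ hx.le

lemma continuousWithinAt_integral_Ioi (hφ : IntegrableOn φ (Ioi a)) :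
    ContinuousWithinAt (fun x => ∫ t in Ioi x, φ t) (Ici a) a := by
  have hprim : ContinuousWithinAt (fun x => ∫ t in a..x, φ t) (Icc a (a + 1)) a := by
    refine intervalIntegral.continuousWithinAt_primitive (measure_singleton a) ?_
    rw [min_self, max_eq_right (by linarith)]
    exact (intervalIntegrable_iff_integrableOn_Ioc_of_le (by linarith)).2
      (hφ.mono_set Ioc_subset_Ioi_self)
  rw [ContinuousWithinAt, nhdsWithin_Icc_eq_nhdsGE (by linarith)] at hprim
  refine ((continuousWithinAt_const (b := ∫ t in Ioi a, φ t)).sub hprim).congr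
    (fun x hx => ?_) ?_
  · exact integral_Ioi_eq_sub_intervalIntegral hφ hx
  · simp

end TailIntegral

lemma image_sub_le_mul_sub_of_hasDerivAt_le {f f' : ℝ → ℝ} {a C : ℝ}
    (hf : ∀ x ≥ a, HasDerivAt f (f' x) x) (hle : ∀ x > a, f' x ≤ C) {x : ℝ} (hx : a ≤ x) :
    f x - f a ≤ C * (x - a) := by
  refine (convex_Ici a).image_sub_le_mul_sub_of_deriv_le
    (fun y hy => (hf y hy).continuousAt.continuousWithinAt) (fun y hy => ?_) (fun y hy => ?_)
    a self_mem_Ici x hx hx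
  all_goals rw [interior_Ici] at hy
  · exact (hf y (le_of_lt hy)).differentiableAt.differentiableWithinAt
  · rw [(hf y (le_of_lt hy)).deriv]
    exact hle y hy

lemma eqOn_Ioi_of_hasDerivAt {F G F' : ℝ → ℝ} (hF : ∀ x > 0, HasDerivAt F (F' x) x)
    (hG : ∀ x > 0, HasDerivAt G (F' x) x) (hF0 : ContinuousWithinAt F (Ioi 0) 0)
    (hG0 : ContinuousWithinAt G (Ioi 0) 0) (h0 : F 0 = G 0) : EqOn F G (Ioi 0) := by
  intro x (hx : 0 < x)
  have hderiv : ∀ y > 0, HasDerivAt (fun y => F y - G y) 0 y := fun y hy => by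
    simpa using (hF y hy).fun_sub (hG y hy)
  have hconst : ∀ y > 0, F y - G y = F x - G x := fun y hy =>
    isOpen_Ioi.is_const_of_deriv_eq_zero isPreconnected_Ioi
      (fun z hz => (hderiv z hz).differentiableAt.differentiableWithinAt)
      (fun z hz => (hderiv z hz).deriv) hy hx
  have hlim : Tendsto (fun y => F y - G y) (𝓝[>] 0) (𝓝 (F x - G x)) :=
    tendsto_const_nhds.congr' (eventually_nhdsWithin_of_forall fun y hy => (hconst y hy).symm)
  have := tendsto_nhds_unique hlim (hF0.fun_sub hG0)
  linarith

lemma le_of_tendsto_div_of_hasDerivAt_le {V W : ℝ → ℝ} {a c L : ℝ}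
    (hV : ∀ x ≥ a, HasDerivAt V (W x) x) (hW : ∀ x > a, W x ≤ c)
    (hL : Tendsto (fun x => V x / x) atTop (𝓝 L)) : L ≤ c := by
  have hlim : Tendsto (fun x => c + (V a - c * a) / x) atTop (𝓝 (c + 0)) :=
    tendsto_const_nhds.add (tendsto_const_nhds.div_atTop tendsto_id)
  rw [add_zero] at hlim
  refine le_of_tendsto_of_tendsto hL hlim ?_
  filter_upwards [eventually_ge_atTop a, eventually_gt_atTop 0] with x hax hx
  have := image_sub_le_mul_sub_of_hasDerivAt_le hV hW hax
  rw [div_le_iff₀ hx, add_mul, div_mul_cancel₀ _ hx.ne']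
  linarith

lemma le_of_tendsto_div_of_le_hasDerivAt {V W : ℝ → ℝ} {a c L : ℝ}
    (hV : ∀ x ≥ a, HasDerivAt V (W x) x) (hW : ∀ x > a, c ≤ W x)
    (hL : Tendsto (fun x => V x / x) atTop (𝓝 L)) : c ≤ L := by
  have := le_of_tendsto_div_of_hasDerivAt_le (V := fun x => -V x) (W := fun x => -W x) (c := -c)
    (fun x hx => (hV x hx).neg) (fun x hx => neg_le_neg (hW x hx))
    (by simpa only [neg_div] using hL.neg)
  linarith

lemma exists_le_mul_sub_sq_of_hasDerivAt {U P V : ℝ → ℝ} {δ : ℝ}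
    (hU : ∀ x ≥ 1, HasDerivAt U (P x) x) (hP : ∀ x ≥ 1, HasDerivAt P (V x) x)
    (hV : ∀ x > 1, V x ≤ -δ) : ∃ B, ∀ r ≥ 1, U r ≤ B * r - δ / 2 * r ^ 2 := by
  have hPle : ∀ x ≥ 1, P x - P 1 ≤ -δ * (x - 1) := fun x hx =>
    image_sub_le_mul_sub_of_hasDerivAt_le hP hV hx
  set Q : ℝ → ℝ := fun x => U x - (P 1 + δ) * x + δ / 2 * x ^ 2
  have hQ : ∀ x ≥ 1, HasDerivAt Q (P x - (P 1 + δ) + δ * x) x := fun x hx => by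
    refine (((hU x hx).sub ((hasDerivAt_id' x).const_mul (P 1 + δ))).add
      ((hasDerivAt_pow 2 x).const_mul (δ / 2))).congr_deriv ?_
    push_cast
    ring
  refine ⟨|Q 1| + P 1 + δ, fun r hr => ?_⟩
  have hQr : Q r - Q 1 ≤ 0 * (r - 1) :=
    image_sub_le_mul_sub_of_hasDerivAt_le hQ (fun x hx => by linarith [hPle x hx.le]) hr
  have hQ1 : Q 1 ≤ |Q 1| * r := (le_abs_self _).trans (le_mul_of_one_le_right (abs_nonneg _) hr)
  simp only [Q] at hQr hQ1 ⊢
  linarith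

lemma tendsto_mul_div_self_atTop {f : ℝ → ℝ} {L : ℝ} (hf : Tendsto f atTop (𝓝 L)) :
    Tendsto (fun x => x * f x / x) atTop (𝓝 L) :=
  hf.congr' <| by
    filter_upwards [eventually_ne_atTop 0] with x hx using (mul_div_cancel_left₀ _ hx).symm

section RadialCalculus

variable {w : ℝ → ℝ} {a r : ℝ}

lemma hasDerivAt_of_contDiffOn_Ici (hw : ContDiffOn ℝ 1 w (Ici a)) (hr : a < r) :
    HasDerivAt w (deriv w r) r :=
  ((hw.contDiffAt (Ici_mem_nhds hr)).differentiableAt one_ne_zero).hasDerivAt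

lemma hasDerivAt_deriv_of_contDiffOn_Ici (hw : ContDiffOn ℝ 2 w (Ici a)) (hr : a < r) :
    HasDerivAt (deriv w) (deriv (deriv w) r) r := by
  have h := ((hw.mono Ioi_subset_Ici_self).deriv_of_isOpen (m := 1) isOpen_Ioi
    (by norm_num)).differentiableOn one_ne_zero
  exact (h.differentiableAt (Ioi_mem_nhds hr)).hasDerivAt

lemma tendsto_deriv_nhdsGT_of_contDiffOn_Ici (hw : ContDiffOn ℝ 1 w (Ici a)) :
    Tendsto (deriv w) (𝓝[>] a) (𝓝 (derivWithin w (Ici a) a)) := by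
  have h := hw.continuousOn_derivWithin (uniqueDiffOn_Ici a) le_rfl a self_mem_Ici
  refine (h.mono_left (nhdsWithin_mono _ Ioi_subset_Ici_self)).congr' ?_
  filter_upwards [self_mem_nhdsWithin] with x hx
  exact derivWithin_of_mem_nhds (Ici_mem_nhds hx)

/-- In dimension three, `(r w)'' = r Δw` for the radial Laplacian `Δw = w'' + 2 w' / r`. -/
lemma hasDerivAt_add_mul_deriv (hw : ContDiffOn ℝ 2 w (Ici 0)) (hr : 0 < r) :
    HasDerivAt (fun x => w x + x * deriv w x)
      (r * (deriv (deriv w) r + 2 * deriv w r / r)) r := by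
  refine ((hasDerivAt_of_contDiffOn_Ici (hw.of_le one_le_two) hr).fun_add
    ((hasDerivAt_id' r).fun_mul (hasDerivAt_deriv_of_contDiffOn_Ici hw hr))).congr_deriv ?_
  field_simp
  ring

lemma hasDerivAt_id_mul (hw : ContDiffOn ℝ 1 w (Ici a)) (hr : a < r) :
    HasDerivAt (fun x => x * w x) (w r + r * deriv w r) r :=
  ((hasDerivAt_id' r).fun_mul (hasDerivAt_of_contDiffOn_Ici hw hr)).congr_deriv (by rw [one_mul])

end RadialCalculus

def moment (g : ℝ → ℝ) (j : ℕ) (r : ℝ) : ℝ := ∫ t in Ioi r, t ^ j * g t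

-- `remainderₖ g r = ∫_r^∞ (t - r)^k / k! * g t`, expanded binomially into moments.
def remainder₁ (g : ℝ → ℝ) (r : ℝ) : ℝ := moment g 1 r - r * moment g 0 r

def remainder₂ (g : ℝ → ℝ) (r : ℝ) : ℝ :=
  moment g 2 r / 2 - r * moment g 1 r + r ^ 2 * moment g 0 r / 2

def remainder₃ (g : ℝ → ℝ) (r : ℝ) : ℝ :=
  moment g 3 r / 6 - r * moment g 2 r / 2 + r ^ 2 * moment g 1 r / 2 - r ^ 3 * moment g 0 r / 6

section Moments

variable {g : ℝ → ℝ} {j : ℕ} {r : ℝ}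

lemma moment_nonneg (hg : ∀ t > 0, 0 ≤ g t) (hr : 0 ≤ r) : 0 ≤ moment g j r :=
  setIntegral_nonneg measurableSet_Ioi fun t ht =>
    mul_nonneg (pow_nonneg (hr.trans (le_of_lt ht)) j) (hg t (hr.trans_lt ht))

lemma pow_mul_moment_le (hg : ∀ t > 0, 0 ≤ g t) {k : ℕ}
    (hj : IntegrableOn (fun t => t ^ j * g t) (Ioi 0))
    (hjk : IntegrableOn (fun t => t ^ (j + k) * g t) (Ioi 0)) (hr : 0 ≤ r) :
    r ^ k * moment g j r ≤ moment g (j + k) r := by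
  rw [moment, moment, ← integral_const_mul]
  refine setIntegral_mono_on ((hj.mono_set (Ioi_subset_Ioi hr)).const_mul _)
    (hjk.mono_set (Ioi_subset_Ioi hr)) measurableSet_Ioi fun t ht => ?_
  have ht0 : 0 < t := hr.trans_lt ht
  calc r ^ k * (t ^ j * g t) ≤ t ^ k * (t ^ j * g t) :=
        mul_le_mul_of_nonneg_right (pow_le_pow_left₀ hr (le_of_lt ht) k)
          (mul_nonneg (pow_nonneg ht0.le j) (hg t ht0))
    _ = t ^ (j + k) * g t := by ring

lemma hasDerivAt_moment (hg : ContinuousOn g (Ioi 0))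
    (hj : IntegrableOn (fun t => t ^ j * g t) (Ioi 0)) (hr : 0 < r) :
    HasDerivAt (moment g j) (-(r ^ j * g r)) r :=
  hasDerivAt_integral_Ioi hj hr
    ((continuous_pow j).continuousAt.mul (hg.continuousAt (Ioi_mem_nhds hr)))

lemma continuousWithinAt_moment (hj : IntegrableOn (fun t => t ^ j * g t) (Ioi 0)) :
    ContinuousWithinAt (moment g j) (Ioi 0) 0 :=
  (continuousWithinAt_integral_Ioi hj).mono Ioi_subset_Ici_self

lemma tendsto_moment_atTop : Tendsto (moment g j) atTop (𝓝 0) :=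
  tendsto_integral_Ioi_zero tendsto_id

lemma hasDerivAt_remainder₁ (hg : ContinuousOn g (Ioi 0))
    (hint : ∀ j, IntegrableOn (fun t => t ^ j * g t) (Ioi 0)) (hr : 0 < r) :
    HasDerivAt (remainder₁ g) (-moment g 0 r) r := by
  have h1 := hasDerivAt_moment hg (hint 1) hr
  have h0 := hasDerivAt_moment hg (hint 0) hr
  refine (h1.sub ((hasDerivAt_id' r).mul h0)).congr_deriv ?_
  ring

lemma hasDerivAt_remainder₂ (hg : ContinuousOn g (Ioi 0))
    (hint : ∀ j, IntegrableOn (fun t => t ^ j * g t) (Ioi 0)) (hr : 0 < r) :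
    HasDerivAt (remainder₂ g) (-remainder₁ g r) r := by
  have h2 := hasDerivAt_moment hg (hint 2) hr
  have h1 := hasDerivAt_moment hg (hint 1) hr
  have h0 := hasDerivAt_moment hg (hint 0) hr
  refine (((h2.div_const 2).sub ((hasDerivAt_id' r).mul h1)).add
    (((hasDerivAt_pow 2 r).mul h0).div_const 2)).congr_deriv ?_
  simp only [remainder₁]
  push_cast
  ring

lemma hasDerivAt_remainder₃ (hg : ContinuousOn g (Ioi 0))
    (hint : ∀ j, IntegrableOn (fun t => t ^ j * g t) (Ioi 0)) (hr : 0 < r) :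
    HasDerivAt (remainder₃ g) (-remainder₂ g r) r := by
  have h3 := hasDerivAt_moment hg (hint 3) hr
  have h2 := hasDerivAt_moment hg (hint 2) hr
  have h1 := hasDerivAt_moment hg (hint 1) hr
  have h0 := hasDerivAt_moment hg (hint 0) hr
  refine ((((h3.div_const 6).sub (((hasDerivAt_id' r).mul h2).div_const 2)).add
    (((hasDerivAt_pow 2 r).mul h1).div_const 2)).sub
    (((hasDerivAt_pow 3 r).mul h0).div_const 6)).congr_deriv ?_
  simp only [remainder₂]
  push_cast
  ring

lemma abs_remainder₃_le (hg : ∀ t > 0, 0 ≤ g t)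
    (hint : ∀ j, IntegrableOn (fun t => t ^ j * g t) (Ioi 0)) (hr : 0 ≤ r) :
    |remainder₃ g r| ≤ moment g 3 r := by
  have h1 : r ^ 1 * moment g 2 r ≤ moment g 3 r := pow_mul_moment_le hg (hint _) (hint _) hr
  have h2 : r ^ 2 * moment g 1 r ≤ moment g 3 r := pow_mul_moment_le hg (hint _) (hint _) hr
  have h3 : r ^ 3 * moment g 0 r ≤ moment g 3 r := pow_mul_moment_le hg (hint _) (hint _) hr
  have n0 := moment_nonneg (j := 0) hg hr
  have n1 := moment_nonneg (j := 1) hg hr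
  have n2 := moment_nonneg (j := 2) hg hr
  have p : 0 ≤ r ^ 2 := by positivity
  have p3 : 0 ≤ r ^ 3 := by positivity
  rw [pow_one] at h1
  rw [remainder₃, abs_le]
  constructor <;> nlinarith [mul_nonneg hr n2, mul_nonneg p n1, mul_nonneg p3 n0]

lemma continuousWithinAt_remainders (hint : ∀ j, IntegrableOn (fun t => t ^ j * g t) (Ioi 0)) :
    ContinuousWithinAt (remainder₁ g) (Ioi 0) 0 ∧ ContinuousWithinAt (remainder₂ g) (Ioi 0) 0 ∧
      ContinuousWithinAt (remainder₃ g) (Ioi 0) 0 := by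
  have m := fun j => continuousWithinAt_moment (hint j)
  have x : ContinuousWithinAt (fun x : ℝ => x) (Ioi 0) 0 := continuousWithinAt_id
  exact ⟨(m 1).sub (x.mul (m 0)),
    (((m 2).div_const 2).sub (x.mul (m 1))).add (((x.pow 2).mul (m 0)).div_const 2),
    ((((m 3).div_const 6).sub ((x.mul (m 2)).div_const 2)).add
      (((x.pow 2).mul (m 1)).div_const 2)).sub (((x.pow 3).mul (m 0)).div_const 6)⟩

end Moments

/-- For a solution in dimension three, `(r v)'' = source α u`. -/
def source (α : ℝ) (u : ℝ → ℝ) (t : ℝ) : ℝ := t ^ (1 + α) * exp (u t)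

section Source

variable {α C₀ m : ℝ} {u : ℝ → ℝ}

lemma source_pos {t : ℝ} (ht : 0 < t) : 0 < source α u t :=
  mul_pos (rpow_pos_of_pos ht _) (exp_pos _)

lemma continuousOn_source (hu : ContinuousOn u (Ioi 0)) : ContinuousOn (source α u) (Ioi 0) :=
  (continuousOn_id.rpow_const fun _ ht => Or.inl (ne_of_gt ht)).mul
    (continuous_exp.comp_continuousOn hu)

lemma integrableOn_pow_mul_source (hα : -2 < α) (hu : ContinuousOn u (Ioi 0)) (hm : 0 < m)
    (hdec : ∀ t > 0, u t ≤ C₀ - m * t) (j : ℕ) :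
    IntegrableOn (fun t => t ^ j * source α u t) (Ioi 0) := by
  have hdom : IntegrableOn (fun t : ℝ => exp C₀ * (t ^ ((j : ℝ) + (1 + α)) * exp (-m * t)))
      (Ioi 0) := by
    refine IntegrableOn.congr_fun
      ((integrableOn_rpow_mul_exp_neg_mul_rpow (s := (j : ℝ) + (1 + α)) (p := 1) ?_ one_pos
        hm).const_mul (exp C₀))
      (fun t _ => by simp only [rpow_one]) measurableSet_Ioi
    have : (0 : ℝ) ≤ j := j.cast_nonneg
    linarith
  refine hdom.mono' (((continuous_pow j).continuousOn.mul
    (continuousOn_source hu)).aestronglyMeasurable measurableSet_Ioi) ?_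
  filter_upwards [ae_restrict_mem measurableSet_Ioi] with t (ht : 0 < t)
  rw [norm_of_nonneg (mul_nonneg (pow_nonneg ht.le j) (source_pos ht).le), source,
    ← rpow_natCast, ← mul_assoc, ← rpow_add ht]
  calc t ^ ((j : ℝ) + (1 + α)) * exp (u t) ≤ t ^ ((j : ℝ) + (1 + α)) * exp (C₀ - m * t) :=
        mul_le_mul_of_nonneg_left (exp_le_exp.2 (hdec t ht)) (rpow_nonneg ht.le _)
    _ = exp C₀ * (t ^ ((j : ℝ) + (1 + α)) * exp (-m * t)) := by
        rw [sub_eq_add_neg, exp_add, neg_mul]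
        ring

lemma pow_mul_source_eq (j : ℕ) {s : ℝ} (hs : 0 < s) :
    s ^ j * source α u s = s ^ (((j + 1 : ℕ) : ℝ) + α) * exp (u s) := by
  rw [source, ← mul_assoc, ← rpow_natCast, ← rpow_add hs]
  push_cast
  ring_nf

/-- `u + m t/2` still decays linearly, so pulling `e^{-m t/2}` out of the integrand costs only
a constant. -/
lemma exists_moment_source_le (hα : -2 < α) (hu : ContinuousOn u (Ioi 0)) (hm : 0 < m)
    (hdec : ∀ t > 0, u t ≤ C₀ - m * t) (j : ℕ) :
    ∃ K, ∀ r ≥ 0, moment (source α u) j r ≤ K * exp (-(m / 2) * r) := by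
  set ũ : ℝ → ℝ := fun t => u t + m / 2 * t
  have hint : IntegrableOn (fun t => t ^ j * source α ũ t) (Ioi 0) :=
    integrableOn_pow_mul_source (u := ũ) hα (by fun_prop) (half_pos hm) (C₀ := C₀)
      (fun t ht => by simp only [ũ]; linarith [hdec t ht]) j
  have hsplit : ∀ t, t ^ j * source α u t = exp (-(m / 2) * t) * (t ^ j * source α ũ t) := by
    intro t
    simp only [source, ũ, exp_add, neg_mul, exp_neg]
    field_simp
  refine ⟨∫ t in Ioi 0, t ^ j * source α ũ t, fun r hr => ?_⟩
  calc moment (source α u) j r = ∫ t in Ioi r, exp (-(m / 2) * t) * (t ^ j * source α ũ t) := by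
        simp only [moment, hsplit]
    _ ≤ ∫ t in Ioi r, exp (-(m / 2) * r) * (t ^ j * source α ũ t) := by
        refine setIntegral_mono_on ?_ ((hint.mono_set (Ioi_subset_Ioi hr)).const_mul _)
          measurableSet_Ioi fun t (ht : r < t) => ?_
        · simpa only [hsplit] using
            (integrableOn_pow_mul_source hα hu hm hdec j).mono_set (Ioi_subset_Ioi hr)
        · have ht0 : 0 < t := hr.trans_lt ht
          exact mul_le_mul_of_nonneg_right (exp_le_exp.2 (by nlinarith))
            (mul_nonneg (pow_nonneg ht0.le j) (source_pos ht0).le)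
    _ = exp (-(m / 2) * r) * ∫ t in Ioi r, t ^ j * source α ũ t := integral_const_mul _ _
    _ ≤ exp (-(m / 2) * r) * ∫ t in Ioi 0, t ^ j * source α ũ t := by
        refine mul_le_mul_of_nonneg_left (setIntegral_mono_set hint ?_
          (Ioi_subset_Ioi hr).eventuallyLE) (exp_pos _).le
        filter_upwards [ae_restrict_mem measurableSet_Ioi] with t (ht : 0 < t)
        exact mul_nonneg (pow_nonneg ht.le j) (source_pos ht).le
    _ = _ := mul_comm _ _

end Source

namespace IsEntireRadialSolution

variable {α : ℝ} {u v : ℝ → ℝ} {r : ℝ}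

lemma continuousOn_source (h : IsEntireRadialSolution 3 α u v) :
    ContinuousOn (source α u) (Ioi 0) :=
  _root_.continuousOn_source (h.1.continuousOn.mono Ioi_subset_Ici_self)

lemma hasDerivAt_mul_u (h : IsEntireRadialSolution 3 α u v) (hr : 0 < r) :
    HasDerivAt (fun x => x * u x) (u r + r * deriv u r) r :=
  hasDerivAt_id_mul (h.1.of_le one_le_two) hr

lemma hasDerivAt_mul_v (h : IsEntireRadialSolution 3 α u v) (hr : 0 < r) :
    HasDerivAt (fun x => x * v x) (v r + r * deriv v r) r :=
  hasDerivAt_id_mul (h.2.1.of_le one_le_two) hr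

lemma hasDerivAt_v_add_mul_deriv (h : IsEntireRadialSolution 3 α u v) (hr : 0 < r) :
    HasDerivAt (fun x => v x + x * deriv v x) (source α u r) r := by
  have hode := h.2.2.2.2.2.2 r hr
  norm_num at hode
  refine (hasDerivAt_add_mul_deriv h.2.1 hr).congr_deriv ?_
  rw [hode, source, rpow_add hr, rpow_one, mul_assoc]

lemma hasDerivAt_u_add_mul_deriv (h : IsEntireRadialSolution 3 α u v) (hr : 0 < r) :
    HasDerivAt (fun x => u x + x * deriv u x) (r * v r) r := by
  have hode := h.2.2.2.2.2.1 r hr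
  norm_num at hode
  exact (hasDerivAt_add_mul_deriv h.1 hr).congr_deriv (by rw [hode])

/-- `(r v)'` increases; were it ever `≥ 0`, `v = (r v)/r` could not tend to `0`. -/
lemma v_add_mul_deriv_neg (h : IsEntireRadialSolution 3 α u v) (hsep : Tendsto v atTop (𝓝 0))
    (hr : 0 < r) : v r + r * deriv v r < 0 := by
  set W : ℝ → ℝ := fun x => v x + x * deriv v x
  have hmono : StrictMonoOn W (Ici r) := by
    refine strictMonoOn_of_hasDerivWithinAt_pos (convex_Ici r) (f' := source α u)
      (fun x hx => (h.hasDerivAt_v_add_mul_deriv (hr.trans_le hx)).continuousAt.continuousWithinAt)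
      (fun x hx => ?_) (fun x hx => ?_) <;> rw [interior_Ici] at hx
    · exact (h.hasDerivAt_v_add_mul_deriv (hr.trans hx)).hasDerivWithinAt
    · exact source_pos (hr.trans hx)
  by_contra! hW
  have hlt : W r < W (r + 1) := hmono self_mem_Ici (by simp [mem_Ici]) (by linarith)
  have := le_of_tendsto_div_of_le_hasDerivAt (V := fun x => x * v x) (W := W) (a := r + 1)
    (fun x hx => h.hasDerivAt_mul_v (by linarith))
    (fun x hx => hmono.monotoneOn (by simp [mem_Ici]) (by simp [mem_Ici]; linarith) hx.le)
    (tendsto_mul_div_self_atTop hsep)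
  linarith

/-- `(r u)'' = r v` decreases from `0`, so it stays below its negative value at `r = 1`. -/
lemma exists_le_sub_mul (h : IsEntireRadialSolution 3 α u v) (hsep : Tendsto v atTop (𝓝 0)) :
    ∃ C₀ m, 0 < m ∧ ∀ t > 0, u t ≤ C₀ - m * t := by
  set V : ℝ → ℝ := fun x => x * v x
  have hV1 : V 1 < 0 := by
    obtain ⟨c, hc, hslope⟩ := exists_hasDerivAt_eq_slope V _ zero_lt_one
      (continuousOn_id.mul (h.2.1.continuousOn.mono Icc_subset_Ici_self))
      (fun x hx => h.hasDerivAt_mul_v hx.1)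
    have := h.v_add_mul_deriv_neg hsep hc.1
    rw [hslope] at this
    simpa [V] using this
  obtain ⟨B, hB⟩ := exists_le_mul_sub_sq_of_hasDerivAt (δ := -V 1)
    (fun x hx => h.hasDerivAt_mul_u (by linarith))
    (fun x hx => h.hasDerivAt_u_add_mul_deriv (by linarith))
    (fun x hx => by
      linarith [image_sub_le_mul_sub_of_hasDerivAt_le (f := V)
        (fun y hy => h.hasDerivAt_mul_v (by linarith))
        (fun y hy => (h.v_add_mul_deriv_neg hsep (by linarith)).le) hx.le])
  obtain ⟨C₁, hC₁⟩ := isCompact_Icc.exists_bound_of_continuousOn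
    (h.1.continuousOn.mono fun x (hx : x ∈ Icc 0 1) => hx.1)
  refine ⟨max B (C₁ - V 1 / 2), -V 1 / 2, by linarith, fun t ht => ?_⟩
  rcases le_total t 1 with ht1 | ht1
  · have := (le_abs_self _).trans (hC₁ t ⟨ht.le, ht1⟩)
    nlinarith [le_max_right B (C₁ - V 1 / 2)]
  · have := hB t ht1
    have hmax := le_max_left B (C₁ - V 1 / 2)
    nlinarith

/-- `(r v)' + ∫_r^∞ source` is constant, and the constant vanishes because `v → 0`. -/
lemma v_add_mul_deriv_eq (h : IsEntireRadialSolution 3 α u v) (hsep : Tendsto v atTop (𝓝 0))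
    (hint : ∀ j, IntegrableOn (fun t => t ^ j * source α u t) (Ioi 0)) (hr : 0 < r) :
    v r + r * deriv v r = -moment (source α u) 0 r := by
  set W : ℝ → ℝ := fun x => v x + x * deriv v x
  set M := moment (source α u) 0
  have hD : ∀ y > 0, HasDerivAt (fun x => W x + M x) 0 y := fun y hy =>
    ((h.hasDerivAt_v_add_mul_deriv hy).add
      (hasDerivAt_moment h.continuousOn_source (hint 0) hy)).congr_deriv (by simp)
  have hconst : ∀ x > 0, W x + M x = W 1 + M 1 := fun x hx =>
    isOpen_Ioi.is_const_of_deriv_eq_zero isPreconnected_Ioi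
      (fun y hy => (hD y hy).differentiableAt.differentiableWithinAt)
      (fun y hy => (hD y hy).deriv) hx (mem_Ioi.2 one_pos)
  have hle : W 1 + M 1 ≤ 0 := by
    have hlim : Tendsto (fun x => W 1 + M 1 - M x) atTop (𝓝 (W 1 + M 1)) := by
      simpa using tendsto_const_nhds.sub (tendsto_moment_atTop (g := source α u) (j := 0))
    refine le_of_tendsto hlim ?_
    filter_upwards [eventually_gt_atTop 0] with x hx
    linarith [hconst x hx, h.v_add_mul_deriv_neg hsep hx]
  have hge : 0 ≤ W 1 + M 1 :=
    le_of_tendsto_div_of_hasDerivAt_le (V := fun x => x * v x) (W := W) (a := 1)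
      (fun x hx => h.hasDerivAt_mul_v (by linarith))
      (fun x hx => by
        linarith [hconst x (by linarith), moment_nonneg (j := 0) (r := x)
          (fun t ht => (source_pos (α := α) (u := u) ht).le) (by linarith)])
      (tendsto_mul_div_self_atTop hsep)
  linarith [hconst r hr]

lemma mul_v_eq (h : IsEntireRadialSolution 3 α u v) (hsep : Tendsto v atTop (𝓝 0))
    (hint : ∀ j, IntegrableOn (fun t => t ^ j * source α u t) (Ioi 0)) (hr : 0 < r) :
    r * v r = remainder₁ (source α u) r - moment (source α u) 1 0 := by
  refine eqOn_Ioi_of_hasDerivAt (F' := fun x => -moment (source α u) 0 x)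
    (fun x hx => (h.hasDerivAt_mul_v hx).congr_deriv (h.v_add_mul_deriv_eq hsep hint hx))
    (fun x hx => (hasDerivAt_remainder₁ h.continuousOn_source hint hx).sub_const _)
    ((continuousWithinAt_id.mul (h.2.1.continuousOn.continuousWithinAt self_mem_Ici)).mono
      Ioi_subset_Ici_self)
    ((continuousWithinAt_remainders hint).1.sub continuousWithinAt_const) (by simp [remainder₁]) hr

lemma u_add_mul_deriv_eq (h : IsEntireRadialSolution 3 α u v) (hsep : Tendsto v atTop (𝓝 0))
    (hint : ∀ j, IntegrableOn (fun t => t ^ j * source α u t) (Ioi 0)) (hr : 0 < r) :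
    u r + r * deriv u r = moment (source α u) 2 0 / 2 - moment (source α u) 1 0 * r
      - remainder₂ (source α u) r := by
  have hP0 : ContinuousWithinAt (fun x => u x + x * deriv u x) (Ioi 0) 0 := by
    have hu0 := (h.1.continuousOn.continuousWithinAt self_mem_Ici).mono Ioi_subset_Ici_self
    have := hu0.tendsto.add
      ((tendsto_nhdsWithin_of_tendsto_nhds (a := (0 : ℝ)) (s := Ioi 0) tendsto_id).mul
        (tendsto_deriv_nhdsGT_of_contDiffOn_Ici (h.1.of_le one_le_two)))
    simpa [ContinuousWithinAt] using this
  refine eqOn_Ioi_of_hasDerivAt (F' := fun x => x * v x)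
    (fun x hx => h.hasDerivAt_u_add_mul_deriv hx)
    (fun x hx => ((((hasDerivAt_id' x).const_mul _).const_sub _).sub
      (hasDerivAt_remainder₂ h.continuousOn_source hint hx)).congr_deriv ?_)
    hP0 ?_ ?_ hr
  · rw [h.mul_v_eq hsep hint hx]
    ring
  · exact (continuousWithinAt_const.sub (continuousWithinAt_const.mul continuousWithinAt_id)).sub
      (continuousWithinAt_remainders hint).2.1
  · simp [remainder₂, h.2.2.1]

lemma mul_u_eq (h : IsEntireRadialSolution 3 α u v) (hsep : Tendsto v atTop (𝓝 0))
    (hint : ∀ j, IntegrableOn (fun t => t ^ j * source α u t) (Ioi 0)) (hr : 0 < r) :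
    r * u r = remainder₃ (source α u) r - moment (source α u) 1 0 / 2 * r ^ 2
      + moment (source α u) 2 0 / 2 * r - moment (source α u) 3 0 / 6 := by
  refine eqOn_Ioi_of_hasDerivAt (F' := fun x => u x + x * deriv u x)
    (fun x hx => h.hasDerivAt_mul_u hx)
    (fun x hx => ((((hasDerivAt_remainder₃ h.continuousOn_source hint hx).sub
      ((hasDerivAt_pow 2 x).const_mul _)).add ((hasDerivAt_id' x).const_mul _)).sub_const
      _).congr_deriv ?_)
    ((continuousWithinAt_id.mul (h.1.continuousOn.continuousWithinAt self_mem_Ici)).mono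
      Ioi_subset_Ici_self) ?_ ?_ hr
  · rw [h.u_add_mul_deriv_eq hsep hint hx]
    push_cast
    ring
  · exact ((((continuousWithinAt_remainders hint).2.2.sub
      (continuousWithinAt_const.mul (continuousWithinAt_id.pow 2))).add
      (continuousWithinAt_const.mul continuousWithinAt_id)).sub continuousWithinAt_const)
  · simp [remainder₃]

end IsEntireRadialSolution

/-- Asymptotics of the separatrix solution in dimension `N = 3`: the integrals
`A_k = ∫₀^∞ s^{k+α} e^{u(s)} ds` are finite for `k = 2, 3, 4` and
`u(r) = a₁ r + a₂ + a₃/r + O(e^{-cr})` as `r → ∞`, where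
`a₁ = -A₂/2`, `a₂ = A₃/2`, `a₃ = -A₄/6`. -/
theorem separatrix_asymptotics_dim3
    (α : ℝ) (hα : -2 < α) (u v : ℝ → ℝ)
    (h : IsEntireRadialSolution 3 α u v)
    (hsep : Filter.Tendsto v Filter.atTop (nhds 0)) :
    (∀ k : ℕ, k = 2 ∨ k = 3 ∨ k = 4 →
      IntegrableOn (fun s : ℝ => s ^ ((k : ℝ) + α) * Real.exp (u s)) (Set.Ioi 0)) ∧
    ∃ c > (0 : ℝ), ∃ C > (0 : ℝ), ∀ r : ℝ, 1 ≤ r →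
      |u r - (-(∫ s in Set.Ioi (0 : ℝ), s ^ ((2 : ℝ) + α) * Real.exp (u s)) / 2) * r
          - (∫ s in Set.Ioi (0 : ℝ), s ^ ((3 : ℝ) + α) * Real.exp (u s)) / 2
          - (-(∫ s in Set.Ioi (0 : ℝ), s ^ ((4 : ℝ) + α) * Real.exp (u s)) / 6) / r|
        ≤ C * Real.exp (-c * r) := by
  obtain ⟨C₀, m, hm, hdec⟩ := h.exists_le_sub_mul hsep
  have hu : ContinuousOn u (Ioi 0) := h.1.continuousOn.mono Ioi_subset_Ici_self
  have hint := integrableOn_pow_mul_source hα hu hm hdec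
  have hA : ∀ j : ℕ, ∫ s in Ioi 0, s ^ (((j + 1 : ℕ) : ℝ) + α) * exp (u s) =
      moment (source α u) j 0 := fun j =>
    setIntegral_congr_fun measurableSet_Ioi fun s hs => (pow_mul_source_eq j hs).symm
  refine ⟨fun k hk => ?_, m / 2, half_pos hm, ?_⟩
  · obtain ⟨j, rfl⟩ : ∃ j, k = j + 1 := ⟨k - 1, by omega⟩
    exact (hint j).congr_fun (fun s hs => pow_mul_source_eq j hs) measurableSet_Ioi
  obtain ⟨K, hK⟩ := exists_moment_source_le hα hu hm hdec 3
  refine ⟨|K| + 1, by positivity, fun r hr => ?_⟩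
  have hr0 : 0 < r := one_pos.trans_le hr
  have h2 := hA 1
  have h3 := hA 2
  have h4 := hA 3
  norm_num at h2 h3 h4
  have hrem : u r - -moment (source α u) 1 0 / 2 * r - moment (source α u) 2 0 / 2
      - -moment (source α u) 3 0 / 6 / r = remainder₃ (source α u) r / r := by
    field_simp
    linear_combination 12 * h.mul_u_eq hsep hint hr0
  rw [h2, h3, h4, hrem, abs_div, abs_of_pos hr0]
  calc |remainder₃ (source α u) r| / r ≤ |remainder₃ (source α u) r| :=
        div_le_self (abs_nonneg _) hr
    _ ≤ moment (source α u) 3 r := abs_remainder₃_le (fun t ht => (source_pos ht).le) hint hr0.le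
    _ ≤ K * exp (-(m / 2) * r) := hK r hr0.le
    _ ≤ (|K| + 1) * exp (-(m / 2) * r) := by gcongr; linarith [le_abs_self K]
end
end
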